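/- arXiv:2605.27341 — 9 statements merged into one kernel-verified Lean document; each statement's English description precedes it below -/
import Mathlib

section
/- ($f$–$f^*$ Lemma, part (b).) Let H be a real Hilbert space, D ⊆ H a subspace, and T : D → H a linear map that is symmetric: ⟨Tx, y⟩ = ⟨x, Ty⟩ for all x, y ∈ D. Assume: (i) T is injective on D; (ii) there exist e ∈ D with ‖e‖ = 1 and λ > 0 such that Te = −λe; (iii) there exists μ > 0 such that ⟨Tw, w⟩ ≥ μ‖w‖² for every w ∈ D with ⟨w, e⟩ = 0; (iv) there exist f, f* ∈ D with T f* = f and ⟨f, f*⟩ < 0. Then there exists μ* > 0 such that for every v ∈ D with ⟨v, f⟩ = 0, one has ⟨Tv, v⟩ ≥ μ* ‖v‖². -/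
/-- ($f$–$f^*$ Lemma, part (b)). Under the assumptions of part (a),
if in addition the quadratic form of `T` is coercive on the orthogonal
complement of the negative eigenvector `e`, then it is coercive on the
orthogonal complement of `f`. -/
theorem f_fstar_lemma_b {H : Type*} [NormedAddCommGroup H] [InnerProductSpace ℝ H]
    [CompleteSpace H]
    (D : Submodule ℝ H) (T : D →ₗ[ℝ] H)
    (hsym : ∀ x y : D, (inner ℝ (T x) (y : H) : ℝ) = inner ℝ (x : H) (T y))
    (hinj : ∀ x : D, T x = 0 → x = 0)
    (e : D) (lam : ℝ) (he : ‖(e : H)‖ = 1) (hlam : 0 < lam)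
    (heig : T e = -(lam • (e : H)))
    (mu : ℝ) (hmu : 0 < mu)
    (hcoer : ∀ w : D, (inner ℝ (w : H) (e : H) : ℝ) = 0 →
      mu * ‖(w : H)‖ ^ 2 ≤ (inner ℝ (T w) (w : H) : ℝ))
    (f fstar : D) (hTf : T fstar = (f : H))
    (hneg : (inner ℝ (f : H) (fstar : H) : ℝ) < 0) :
    ∃ mustar : ℝ, 0 < mustar ∧
      ∀ v : D, (inner ℝ (v : H) (f : H) : ℝ) = 0 →
        mustar * ‖(v : H)‖ ^ 2 ≤ (inner ℝ (T v) (v : H) : ℝ) := by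
  classical
  have hee : (inner ℝ (e : H) (e : H) : ℝ) = 1 := by
    rw [real_inner_self_eq_norm_sq, he]; norm_num
  set β : ℝ := inner ℝ (fstar : H) (e : H) with hβ
  set g : D := fstar - β • e with hgdef
  have hgH : (g : H) = (fstar : H) - β • (e : H) := by
    simp [hgdef]
  have hge : (inner ℝ (g : H) (e : H) : ℝ) = 0 := by
    rw [hgH, inner_sub_left, real_inner_smul_left, hee, ← hβ]; ring
  have heg : (inner ℝ (e : H) (g : H) : ℝ) = 0 := by
    rw [real_inner_comm]; exact hge
  have hTee : (inner ℝ (T e) (e : H) : ℝ) = -lam := by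
    rw [heig, inner_neg_left, real_inner_smul_left, hee]; ring
  have hTeg : (inner ℝ (T e) (g : H) : ℝ) = 0 := by
    rw [heig, inner_neg_left, real_inner_smul_left, heg]; ring
  have hTge : (inner ℝ (T g) (e : H) : ℝ) = 0 := by
    rw [hsym g e, heig, inner_neg_right, real_inner_smul_right, hge]; ring
  set Bgg : ℝ := inner ℝ (T g) (g : H) with hBggdef
  have hBgg0 : 0 ≤ Bgg := le_trans (by positivity) (hcoer g hge)
  have hfstar : fstar = g + β • e := by rw [hgdef]; abel
  have hff : (inner ℝ (f : H) (fstar : H) : ℝ) = Bgg - lam * β ^ 2 := by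
    rw [← hTf, hfstar]
    push_cast [map_add, map_smul, inner_add_left, real_inner_smul_left]
    rw [inner_add_right, inner_add_right, real_inner_smul_right,
      real_inner_smul_right, hTee, hTeg, hTge, ← hBggdef]
    ring
  set P : ℝ := lam * β ^ 2 with hPdef
  have hBggP : Bgg < P := by
    have := hneg; rw [hff] at this; linarith
  have hP : 0 < P := lt_of_le_of_lt hBgg0 hBggP
  set m : ℝ := min mu lam with hm
  have hm0 : 0 < m := lt_min hmu hlam
  clear_value g β Bgg P m
  refine ⟨(P - Bgg) * m / (2 * P),
    div_pos (mul_pos (by linarith) hm0) (by linarith), ?_⟩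
  intro v hvf
  set α : ℝ := inner ℝ (v : H) (e : H) with hα
  set w : D := v - α • e with hwdef
  have hwH : (w : H) = (v : H) - α • (e : H) := by simp [hwdef]
  have hwe : (inner ℝ (w : H) (e : H) : ℝ) = 0 := by
    rw [hwH, inner_sub_left, real_inner_smul_left, hee, ← hα]; ring
  have hew : (inner ℝ (e : H) (w : H) : ℝ) = 0 := by
    rw [real_inner_comm]; exact hwe
  have hTwe : (inner ℝ (T w) (e : H) : ℝ) = 0 := by
    rw [hsym w e, heig, inner_neg_right, real_inner_smul_right, hwe]; ring
  have hTew : (inner ℝ (T e) (w : H) : ℝ) = 0 := by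
    rw [heig, inner_neg_left, real_inner_smul_left, hew]; ring
  have hv : v = w + α • e := by rw [hwdef]; abel
  set Bww : ℝ := inner ℝ (T w) (w : H) with hBwwdef
  set Bwg : ℝ := inner ℝ (T w) (g : H) with hBwgdef
  have hmuw : mu * ‖(w : H)‖ ^ 2 ≤ Bww := hcoer w hwe
  have hBww0 : 0 ≤ Bww := le_trans (by positivity) hmuw
  clear_value w α Bww Bwg
  -- relation from v ⊥ f : lam * α * β = Bwg
  have hrel : lam * α * β = Bwg := by
    have h0 : (inner ℝ (T v) (fstar : H) : ℝ) = 0 := by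
      rw [hsym v fstar, hTf]; exact hvf
    rw [hv, hfstar] at h0
    push_cast [map_add, map_smul, inner_add_left, real_inner_smul_left] at h0
    rw [inner_add_right, inner_add_right, real_inner_smul_right,
      real_inner_smul_right, hTee, hTeg, hTwe, ← hBwgdef] at h0
    linarith
  -- Cauchy-Schwarz for the form on e-perp
  have hCS : Bwg ^ 2 ≤ Bgg * Bww := by
    have hquad : ∀ t : ℝ, 0 ≤ Bgg * (t * t) + 2 * Bwg * t + Bww := by
      intro t
      have hue : (inner ℝ ((w + t • g : D) : H) (e : H) : ℝ) = 0 := by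
        push_cast
        rw [inner_add_left, real_inner_smul_left, hwe, hge]; ring
      have h1 := le_trans (by positivity) (hcoer (w + t • g) hue)
      have hTgw : (inner ℝ (T g) (w : H) : ℝ) = Bwg := by
        rw [hsym g w, real_inner_comm, ← hBwgdef]
      push_cast [map_add, map_smul, inner_add_left, real_inner_smul_left] at h1
      rw [inner_add_right, inner_add_right, real_inner_smul_right,
        real_inner_smul_right, hTgw, ← hBwwdef, ← hBwgdef, ← hBggdef] at h1
      ring_nf at h1 ⊢
      linarith only [h1]
    have hd : discrim Bgg (2 * Bwg) Bww ≤ 0 := discrim_le_zero hquad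
    rw [discrim] at hd
    ring_nf at hd ⊢
    linarith only [hd]
  have hkey : lam * α ^ 2 * P ≤ Bgg * Bww := by
    have h2 : (lam * α * β) ^ 2 ≤ Bgg * Bww := by rw [hrel]; exact hCS
    have h3 : lam * α ^ 2 * P = (lam * α * β) ^ 2 := by rw [hPdef]; ring
    rw [h3]; exact h2
  have hlamα : lam * α ^ 2 ≤ Bww := by
    have k1 : Bgg * Bww ≤ P * Bww := mul_le_mul_of_nonneg_right hBggP.le hBww0
    have k2 : P * (lam * α ^ 2) ≤ P * Bww := by linarith only [hkey, k1]
    exact le_of_mul_le_mul_left k2 hP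
  -- norm decomposition
  have hnorm : ‖(v : H)‖ ^ 2 = α ^ 2 + ‖(w : H)‖ ^ 2 := by
    have : (v : H) = (w : H) + α • (e : H) := by rw [hwH]; abel
    rw [← real_inner_self_eq_norm_sq, this, inner_add_left, inner_add_right,
      inner_add_right, real_inner_smul_left, real_inner_smul_left,
      real_inner_smul_right, real_inner_smul_right, hee, hwe, hew,
      real_inner_self_eq_norm_sq]
    ring
  -- quadratic form value
  have hBvv : (inner ℝ (T v) (v : H) : ℝ) = Bww - lam * α ^ 2 := by
    rw [hv]
    push_cast [map_add, map_smul, inner_add_left, real_inner_smul_left]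
    rw [inner_add_right, inner_add_right, real_inner_smul_right,
      real_inner_smul_right, hTee, hTew, hTwe, ← hBwwdef]
    ring
  rw [hBvv, hnorm, div_mul_eq_mul_div, div_le_iff₀ (by positivity : (0:ℝ) < 2 * P)]
  set W : ℝ := ‖(w : H)‖ ^ 2 with hW
  have hW0 : 0 ≤ W := by positivity
  have h1 : (P - Bgg) * (m * (α ^ 2 + W)) ≤ (P - Bgg) * (2 * Bww) := by
    apply mul_le_mul_of_nonneg_left _ (by linarith)
    have ha : m * α ^ 2 ≤ lam * α ^ 2 :=
      mul_le_mul_of_nonneg_right (hm ▸ min_le_right mu lam) (sq_nonneg α)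
    have hb : m * W ≤ mu * W :=
      mul_le_mul_of_nonneg_right (hm ▸ min_le_left mu lam) hW0
    linarith only [ha, hb, hmuw, hlamα]
  have h2 : (P - Bgg) * (2 * Bww) ≤ (Bww - lam * α ^ 2) * (2 * P) := by
    linarith only [hkey]
  linarith only [h1, h2]
end

section
/- Let H be a real inner product space, D ⊆ H a subspace, and T : D → H a linear map that is symmetric: ⟨Tx, y⟩ = ⟨x, Ty⟩ for all x, y ∈ D. Let e, f, f* ∈ D satisfy T f* = f and ⟨f*, e⟩ ≠ 0. Let v ∈ D satisfy ⟨v, f⟩ = 0, and set w = v − (⟨v, e⟩ / ⟨f*, e⟩) f*. Then ⟨w, e⟩ = 0 and ⟨Tv, v⟩ = −(⟨v, e⟩² ⟨f, f*⟩) / ⟨e, f*⟩² + ⟨Tw, w⟩. -/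
/-- the key algebraic decomposition identity in the proof of the
$f$–$f^*$ Lemma. -/
theorem f_fstar_decomposition {H : Type*} [NormedAddCommGroup H] [InnerProductSpace ℝ H]
    (D : Submodule ℝ H) (T : D →ₗ[ℝ] H)
    (hsym : ∀ x y : D, (inner ℝ (T x) (y : H) : ℝ) = inner ℝ (x : H) (T y))
    (e f fstar : D) (hTf : T fstar = (f : H))
    (hne : (inner ℝ (fstar : H) (e : H) : ℝ) ≠ 0)
    (v : D) (hv : (inner ℝ (v : H) (f : H) : ℝ) = 0)
    (w : D)
    (hw : w = v - (((inner ℝ (v : H) (e : H) : ℝ) / (inner ℝ (fstar : H) (e : H) : ℝ)) • fstar)) :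
    (inner ℝ (w : H) (e : H) : ℝ) = 0 ∧
      (inner ℝ (T v) (v : H) : ℝ) =
        -((inner ℝ (v : H) (e : H) : ℝ) ^ 2 * (inner ℝ (f : H) (fstar : H) : ℝ))
            / (inner ℝ (e : H) (fstar : H) : ℝ) ^ 2
          + (inner ℝ (T w) (w : H) : ℝ) := by
  set c : ℝ := (inner ℝ (v : H) (e : H) : ℝ) / (inner ℝ (fstar : H) (e : H) : ℝ) with hc
  have hwe : ((w : D) : H) = (v : H) - c • (fstar : H) := by
    rw [hw]; push_cast [Submodule.coe_sub, Submodule.coe_smul]; ring_nf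
  have hTw : T w = T v - c • (f : H) := by
    rw [hw, map_sub, map_smul, hTf]
  have hTvf : (inner ℝ (T v) ((fstar : D) : H) : ℝ) = 0 := by
    rw [hsym v fstar, hTf, hv]
  have hfv : (inner ℝ (f : H) (v : H) : ℝ) = 0 := by
    rw [real_inner_comm, hv]
  constructor
  · rw [hwe, inner_sub_left, real_inner_smul_left, hc]
    field_simp
    ring
  · have key : (inner ℝ (T w) ((w : D) : H) : ℝ)
        = (inner ℝ (T v) (v : H) : ℝ) + c ^ 2 * (inner ℝ (f : H) (fstar : H) : ℝ) := by
      rw [hTw, hwe, inner_sub_left, inner_sub_right, inner_sub_right,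
        real_inner_smul_left, real_inner_smul_left, real_inner_smul_right,
        real_inner_smul_right, hTvf, hfv]
      ring
    have hef : (inner ℝ (e : H) (fstar : H) : ℝ) = inner ℝ (fstar : H) (e : H) := real_inner_comm _ _
    rw [key, hc, hef]
    field_simp
    ring
end

section
/- Let H be a real Hilbert space, D ⊆ H a dense subspace, and T : D → H a linear map that is symmetric: ⟨Tx, y⟩ = ⟨x, Ty⟩ for all x, y ∈ D. Suppose e ∈ D and λ ∈ ℝ satisfy Te = −λe; suppose T is injective on D (Tx = 0 with x ∈ D implies x = 0); and suppose ⟨Tw, w⟩ ≥ 0 for every w ∈ D with ⟨w, e⟩ = 0. Then the quadratic form of T is strictly positive on the orthogonal complement of e: for every w ∈ D with ⟨w, e⟩ = 0 and w ≠ 0, one has ⟨Tw, w⟩ > 0. -/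
/-- upgrade from nonnegativity to strict positivity of the
quadratic form of a symmetric injective operator on the orthogonal complement
of an eigenvector, on a dense domain. -/
theorem strict_positivity_on_orthogonal_complement {H : Type*}
    [NormedAddCommGroup H] [InnerProductSpace ℝ H] [CompleteSpace H]
    (D : Submodule ℝ H) (hD : Dense (D : Set H)) (T : D →ₗ[ℝ] H)
    (hsym : ∀ x y : D, (inner ℝ (T x) (y : H) : ℝ) = inner ℝ (x : H) (T y))
    (e : D) (lam : ℝ) (heig : T e = -(lam • (e : H)))
    (hinj : ∀ x : D, T x = 0 → x = 0)
    (hnn : ∀ w : D, (inner ℝ (w : H) (e : H) : ℝ) = 0 → 0 ≤ (inner ℝ (T w) (w : H) : ℝ)) :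
    ∀ w : D, (inner ℝ (w : H) (e : H) : ℝ) = 0 → w ≠ 0 →
      0 < (inner ℝ (T w) (w : H) : ℝ) := by
  intro w hwe hw0
  rcases (hnn w hwe).lt_or_eq with h | h
  · exact h
  exfalso
  have hww : (inner ℝ (T w) (w : H) : ℝ) = 0 := h.symm
  have hTwe : (inner ℝ (T w) (e : H) : ℝ) = 0 := by
    rw [hsym w e, heig, inner_neg_right, real_inner_smul_right, hwe]
    ring
  -- Cauchy–Schwarz step: Tw is orthogonal to every u ∈ D with ⟨u,e⟩ = 0
  have key : ∀ u : D, (inner ℝ (u : H) (e : H) : ℝ) = 0 →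
      (inner ℝ (T w) (u : H) : ℝ) = 0 := by
    intro u hue
    set b : ℝ := inner ℝ (T w) (u : H) with hb
    set c : ℝ := inner ℝ (T u) (u : H) with hcdef
    have hb' : (inner ℝ (T u) (w : H) : ℝ) = b := by
      rw [hsym u w, real_inner_comm]
    have hc : 0 ≤ c := hnn u hue
    have hq : ∀ t : ℝ, 0 ≤ 2 * t * b + t ^ 2 * c := by
      intro t
      have h1 : (inner ℝ (((w + t • u : D)) : H) (e : H) : ℝ) = 0 := by
        push_cast
        rw [inner_add_left, real_inner_smul_left, hwe, hue]
        ring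
      have h2 := hnn (w + t • u) h1
      have h3 : (inner ℝ (T (w + t • u)) (((w + t • u : D)) : H) : ℝ)
          = 2 * t * b + t ^ 2 * c := by
        rw [map_add, map_smul]
        push_cast
        rw [inner_add_left, inner_add_right, inner_add_right,
          real_inner_smul_left, real_inner_smul_left,
          real_inner_smul_right, real_inner_smul_right, hb', hww]
        ring
      linarith [h3 ▸ h2]
    by_contra hbne
    have hc1 : (0 : ℝ) < c + 1 := by linarith
    have hb2 : 0 < b ^ 2 := by positivity
    have hq1 := hq (-b / (c + 1))
    have hexp : 2 * (-b / (c + 1)) * b + (-b / (c + 1)) ^ 2 * c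
        = (b ^ 2 * (-c - 2)) / (c + 1) ^ 2 := by
      field_simp
      ring
    rw [hexp] at hq1
    have hneg : (b ^ 2 * (-c - 2)) / (c + 1) ^ 2 < 0 := by
      apply div_neg_of_neg_of_pos
      · nlinarith
      · positivity
    linarith
  -- Tw is orthogonal to all of D
  have hTwD : ∀ x : H, x ∈ D → (inner ℝ (T w) x : ℝ) = 0 := by
    intro x hx
    set X : D := ⟨x, hx⟩ with hX
    by_cases he : (e : H) = 0
    · exact key X (by simp [he])
    · set μ : ℝ := (inner ℝ x (e : H) : ℝ) / ‖(e : H)‖ ^ 2 with hμ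
      have hne : ‖(e : H)‖ ^ 2 ≠ 0 := pow_ne_zero 2 (norm_ne_zero_iff.mpr he)
      have hue : (inner ℝ (((X - μ • e : D)) : H) (e : H) : ℝ) = 0 := by
        push_cast
        rw [inner_sub_left, real_inner_smul_left, real_inner_self_eq_norm_sq, hμ]
        field_simp
        exact sub_self _
      have hk := key (X - μ • e) hue
      have hdec : (inner ℝ (T w) x : ℝ)
          = (inner ℝ (T w) (((X - μ • e : D)) : H) : ℝ) + μ * inner ℝ (T w) (e : H) := by
        push_cast
        rw [inner_sub_right, real_inner_smul_right]
        ring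
      rw [hk, hTwe] at hdec
      simpa using hdec
  -- density: Tw = 0
  have hclosed : IsClosed {x : H | (inner ℝ (T w) x : ℝ) = 0} :=
    isClosed_eq (Continuous.inner continuous_const continuous_id) continuous_const
  have hall : ∀ x : H, (inner ℝ (T w) x : ℝ) = 0 := by
    intro x
    have hsub : (D : Set H) ⊆ {x : H | (inner ℝ (T w) x : ℝ) = 0} := fun y hy => hTwD y hy
    have := hclosed.closure_subset_iff.mpr hsub
    exact this (hD x)
  have hTw0 : T w = 0 := by
    have := hall (T w)
    exact inner_self_eq_zero.mp this
  exact hw0 (hinj w hTw0)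
end

section
/- (Construction of f*, part (a).) Let H be a real Hilbert space, D ⊆ H a subspace, and U : D → H a linear map. Let f ∈ D with f ≠ 0, and assume: (i) {x ∈ D : Ux = 0} = span{f}; (ii) ⟨Ux, f⟩ = 0 for every x ∈ D. Let h₁, h₂ ∈ H be such that {f, h₁, h₂} is linearly independent, and define h̃_j = h_j − (⟨h_j, f⟩/⟨f, f⟩) f for j = 1, 2. Assume there exist h₁*, h₂* ∈ D with ⟨h_j*, f⟩ = 0 and U h_j* = h̃_j for j = 1, 2. Define V : H → H by Vv = ⟨v, h₁⟩ h₂ + ⟨v, h₂⟩ h₁, and let M be the 3×3 matrix with columns recording the coefficients ⟨Vf, g⟩, ⟨h̃₁ + V h₁*, g⟩, ⟨h̃₂ + V h₂*, g⟩ as g ranges over f, h̃₁, h̃₂ (i.e., M_{i1} = ⟨Vf, g_i⟩, M_{i2} = ⟨h̃₁ + V h₁*, g_i⟩, M_{i3} = ⟨h̃₂ + V h₂*, g_i⟩ with g₁ = f, g₂ = h̃₁, g₃ = h̃₂). Then the kernel of T = U + V on D is trivial ({x ∈ D : (U+V)x = 0} = {0}) if and only if M is nonsingular. -/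
/-- (Construction of f*, part (a)). The kernel of `T = U + V` is
trivial if and only if the 3×3 matrix `M` is nonsingular. -/
theorem construction_fstar_a {H : Type*} [NormedAddCommGroup H] [InnerProductSpace ℝ H]
    [CompleteSpace H]
    (D : Submodule ℝ H) (U : D →ₗ[ℝ] H)
    (f : D) (hf0 : (f : H) ≠ 0)
    (hker : ∀ x : D, U x = 0 ↔ ∃ c : ℝ, (x : H) = c • (f : H))
    (hran : ∀ x : D, (inner ℝ (U x) (f : H) : ℝ) = 0)
    (h₁ h₂ : H) (hind : LinearIndependent ℝ ![(f : H), h₁, h₂])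
    (ht₁ ht₂ : H)
    (hht₁ : ht₁ = h₁ - (((inner ℝ h₁ (f : H) : ℝ) / (inner ℝ (f : H) (f : H) : ℝ)) • (f : H)))
    (hht₂ : ht₂ = h₂ - (((inner ℝ h₂ (f : H) : ℝ) / (inner ℝ (f : H) (f : H) : ℝ)) • (f : H)))
    (h₁s h₂s : D)
    (h₁sorth : (inner ℝ (h₁s : H) (f : H) : ℝ) = 0) (hUh₁s : U h₁s = ht₁)
    (h₂sorth : (inner ℝ (h₂s : H) (f : H) : ℝ) = 0) (hUh₂s : U h₂s = ht₂)
    (V : H → H) (hV : ∀ v : H, V v = (inner ℝ v h₁ : ℝ) • h₂ + (inner ℝ v h₂ : ℝ) • h₁)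
    (M : Matrix (Fin 3) (Fin 3) ℝ)
    (hM : M = Matrix.of fun i j =>
      (inner ℝ (![V (f : H), ht₁ + V (h₁s : H), ht₂ + V (h₂s : H)] j)
        (![(f : H), ht₁, ht₂] i) : ℝ)) :
    (∀ x : D, U x + V (x : H) = 0 → x = 0) ↔ M.det ≠ 0 := by
  have hff : (inner ℝ (f : H) (f : H) : ℝ) ≠ 0 := fun h => hf0 (inner_self_eq_zero.mp h)
  set r₁ : ℝ := (inner ℝ h₁ (f : H) : ℝ) / (inner ℝ (f : H) (f : H) : ℝ) with hr₁
  set r₂ : ℝ := (inner ℝ h₂ (f : H) : ℝ) / (inner ℝ (f : H) (f : H) : ℝ) with hr₂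
  have e₁ : h₁ = ht₁ + r₁ • (f : H) := by rw [hht₁]; abel
  have e₂ : h₂ = ht₂ + r₂ • (f : H) := by rw [hht₂]; abel
  have o₁ : (inner ℝ ht₁ (f : H) : ℝ) = 0 := by
    rw [hht₁, inner_sub_left, real_inner_smul_left, hr₁, div_mul_cancel₀ _ hff, sub_self]
  have o₂ : (inner ℝ ht₂ (f : H) : ℝ) = 0 := by
    rw [hht₂, inner_sub_left, real_inner_smul_left, hr₂, div_mul_cancel₀ _ hff, sub_self]
  -- U f = 0
  have hUf : U f = 0 := (hker f).mpr ⟨1, (one_smul ℝ _).symm⟩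
  -- linear independence helpers
  have hind3 : ∀ a b c : ℝ, a • (f : H) + b • h₁ + c • h₂ = 0 → a = 0 ∧ b = 0 ∧ c = 0 := by
    intro a b c h
    have := Fintype.linearIndependent_iff.mp hind ![a, b, c]
      (by simpa [Fin.sum_univ_three] using h)
    exact ⟨this 0, this 1, this 2⟩
  have hgind : ∀ a b c : ℝ, a • (f : H) + b • ht₁ + c • ht₂ = 0 → a = 0 ∧ b = 0 ∧ c = 0 := by
    intro a b c h
    have h2 : (a - b * r₁ - c * r₂) • (f : H) + b • h₁ + c • h₂ = 0 := by
      rw [e₁, e₂, ← h]; module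
    obtain ⟨ha, hb, hc⟩ := hind3 _ _ _ h2
    refine ⟨?_, hb, hc⟩
    rw [hb, hc] at ha; linarith
  -- V is linear on the combinations we need
  have hVadd : ∀ u v : H, V (u + v) = V u + V v := by
    intro u v; simp only [hV, inner_add_left, add_smul]; abel
  have hVsmul : ∀ (a : ℝ) (u : H), V (a • u) = a • V u := by
    intro a u; simp only [hV, real_inner_smul_left, smul_add, smul_smul]
  -- the three columns vectors
  set w0 : H := V (f : H) with hw0def
  set w1 : H := ht₁ + V (h₁s : H) with hw1def
  set w2 : H := ht₂ + V (h₂s : H) with hw2def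
  -- each wⱼ lies in span {f, ht₁, ht₂}
  have hw0 : ∃ a b c : ℝ, w0 = a • (f : H) + b • ht₁ + c • ht₂ := by
    refine ⟨(inner ℝ (f:H) h₁ : ℝ) * r₂ + (inner ℝ (f:H) h₂ : ℝ) * r₁,
      (inner ℝ (f:H) h₂ : ℝ), (inner ℝ (f:H) h₁ : ℝ), ?_⟩
    rw [hw0def, hV, e₁, e₂]; module
  have hw1 : ∃ a b c : ℝ, w1 = a • (f : H) + b • ht₁ + c • ht₂ := by
    refine ⟨(inner ℝ (h₁s:H) h₁ : ℝ) * r₂ + (inner ℝ (h₁s:H) h₂ : ℝ) * r₁,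
      1 + (inner ℝ (h₁s:H) h₂ : ℝ), (inner ℝ (h₁s:H) h₁ : ℝ), ?_⟩
    rw [hw1def, hV, e₁, e₂]; module
  have hw2 : ∃ a b c : ℝ, w2 = a • (f : H) + b • ht₁ + c • ht₂ := by
    refine ⟨(inner ℝ (h₂s:H) h₁ : ℝ) * r₂ + (inner ℝ (h₂s:H) h₂ : ℝ) * r₁,
      (inner ℝ (h₂s:H) h₂ : ℝ), 1 + (inner ℝ (h₂s:H) h₁ : ℝ), ?_⟩
    rw [hw2def, hV, e₁, e₂]; module
  -- mulVec formula
  have hMv : ∀ (t : Fin 3 → ℝ) (i : Fin 3), M.mulVec t i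
      = (inner ℝ (t 0 • w0 + t 1 • w1 + t 2 • w2) (![(f : H), ht₁, ht₂] i) : ℝ) := by
    intro t i
    simp [hM, Matrix.mulVec, dotProduct, Fin.sum_univ_three,
      inner_add_left, real_inner_smul_left, hw0def, hw1def, hw2def]
    ring
  -- combination of w's vanishing iff coefficients vanish, via M
  have key : ∀ t : Fin 3 → ℝ, t 0 • w0 + t 1 • w1 + t 2 • w2 = 0 → M.mulVec t = 0 := by
    intro t h
    funext i
    rw [hMv t i, h, inner_zero_left]; rfl
  constructor
  · -- kernel trivial → det ≠ 0
    intro hT hdet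
    obtain ⟨t, ht0, htv⟩ := Matrix.exists_mulVec_eq_zero_iff.mpr hdet
    obtain ⟨a0, b0, c0, hw0'⟩ := hw0
    obtain ⟨a1, b1, c1, hw1'⟩ := hw1
    obtain ⟨a2, b2, c2, hw2'⟩ := hw2
    set A : ℝ := t 0 * a0 + t 1 * a1 + t 2 * a2 with hA
    set B : ℝ := t 0 * b0 + t 1 * b1 + t 2 * b2 with hB
    set C : ℝ := t 0 * c0 + t 1 * c1 + t 2 * c2 with hC
    have huc : t 0 • w0 + t 1 • w1 + t 2 • w2
        = A • (f : H) + B • ht₁ + C • ht₂ := by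
      rw [hw0', hw1', hw2', hA, hB, hC]; module
    have hui : ∀ i, (inner ℝ (A • (f : H) + B • ht₁ + C • ht₂) (![(f : H), ht₁, ht₂] i) : ℝ)
        = 0 := by
      intro i; rw [← huc, ← hMv t i, htv]; rfl
    have i0 := hui 0; have i1 := hui 1; have i2 := hui 2
    simp only [Matrix.cons_val_zero, Matrix.cons_val_one, Matrix.head_cons,
      Matrix.cons_val_two, Matrix.tail_cons] at i0 i1 i2
    have hu0 : t 0 • w0 + t 1 • w1 + t 2 • w2 = 0 := by
      rw [huc]
      refine (inner_self_eq_zero (𝕜 := ℝ)).mp ?_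
      rw [inner_add_right, inner_add_right, real_inner_smul_right,
        real_inner_smul_right, real_inner_smul_right, i0, i1, i2]
      ring
    -- build kernel element
    set x : D := t 0 • f + t 1 • h₁s + t 2 • h₂s with hx
    have hTx : U x + V (x : H) = 0 := by
      have hUx : U x = t 1 • ht₁ + t 2 • ht₂ := by
        rw [hx]; simp [map_add, map_smul, hUf, hUh₁s, hUh₂s]
      have hVx : V (x : H) = t 0 • w0 + t 1 • V (h₁s : H) + t 2 • V (h₂s : H) := by
        rw [hx]
        push_cast
        rw [hVadd, hVadd, hVsmul, hVsmul, hVsmul, hw0def]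
      rw [hUx, hVx, ← hu0, hw1def, hw2def]
      module
    have hx0 : x = 0 := hT x hTx
    have hUx0 : t 1 • ht₁ + t 2 • ht₂ = 0 := by
      have : U x = 0 := by rw [hx0, map_zero]
      rw [hx, map_add, map_add, map_smul, map_smul, map_smul, hUf, hUh₁s, hUh₂s] at this
      simpa using this
    obtain ⟨_, hb, hc⟩ := hgind 0 (t 1) (t 2) (by rw [zero_smul, zero_add]; exact hUx0)
    have ht00 : t 0 = 0 := by
      have : (x : H) = t 0 • (f : H) := by rw [hx]; push_cast; rw [hb, hc]; simp
      rw [hx0] at this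
      simp only [Submodule.coe_zero] at this
      rcases smul_eq_zero.mp this.symm with h | h
      · exact h
      · exact absurd h hf0
    exact ht0 (funext fun i => by fin_cases i <;> assumption)
  · -- det ≠ 0 → kernel trivial
    intro hdet x hx
    set α : ℝ := (inner ℝ (x : H) h₁ : ℝ) with hα
    set β : ℝ := (inner ℝ (x : H) h₂ : ℝ) with hβ
    have hUx : U x = -(α • h₂ + β • h₁) := by
      have h := hx
      rw [hV (x : H), ← hα, ← hβ] at h
      exact eq_neg_of_add_eq_zero_left h
    have hVxf : α * (inner ℝ h₂ (f : H) : ℝ) + β * (inner ℝ h₁ (f : H) : ℝ) = 0 := by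
      have h := hran x
      rw [hUx, inner_neg_left, inner_add_left, real_inner_smul_left,
        real_inner_smul_left] at h
      linarith
    have hcomb : α • h₂ + β • h₁ = β • ht₁ + α • ht₂ := by
      have hc : α * r₂ + β * r₁ = 0 := by
        rw [hr₁, hr₂]
        field_simp
        linarith
      have h : α • h₂ + β • h₁ = β • ht₁ + α • ht₂ + (α * r₂ + β * r₁) • (f : H) := by
        rw [e₁, e₂]; module
      rw [hc, zero_smul, add_zero] at h
      exact h
    -- y := x + α h₂s + β h₁s lies in ker U
    have hUy : U (x + α • h₂s + β • h₁s) = 0 := by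
      rw [map_add, map_add, map_smul, map_smul, hUh₁s, hUh₂s, hUx, hcomb]
      abel
    obtain ⟨c, hc⟩ := (hker _).mp hUy
    have hxH : (x : H) = c • (f : H) - β • (h₁s : H) - α • (h₂s : H) := by
      push_cast at hc
      rw [← hc]; abel
    -- compute T x as combination of w's
    have hTx : c • w0 + (-β) • w1 + (-α) • w2 = 0 := by
      have hVx : V (x : H) = c • w0 - β • V (h₁s : H) - α • V (h₂s : H) := by
        rw [hxH, sub_eq_add_neg, sub_eq_add_neg, hVadd, hVadd, hVsmul]
        rw [show (-(β • (h₁s:H))) = (-β) • (h₁s:H) by module,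
            show (-(α • (h₂s:H))) = (-α) • (h₂s:H) by module, hVsmul, hVsmul, hw0def]
        module
      have hUx' : U x = -(β • ht₁ + α • ht₂) := by rw [hUx, hcomb]
      calc c • w0 + (-β) • w1 + (-α) • w2
          = U x + V (x : H) := by rw [hUx', hVx, hw1def, hw2def]; module
        _ = 0 := hx
    have hMt : M.mulVec ![c, -β, -α] = 0 := by
      apply key
      simpa using hTx
    have ht0 : (![c, -β, -α] : Fin 3 → ℝ) = 0 := by
      by_contra hne
      exact hdet (Matrix.exists_mulVec_eq_zero_iff.mp ⟨_, hne, hMt⟩)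
    have hc0 : c = 0 := congrFun ht0 0
    have hβ0 : β = 0 := by have := congrFun ht0 1; simpa [neg_eq_zero] using this
    have hα0 : α = 0 := by have := congrFun ht0 2; simpa [neg_eq_zero] using this
    have : (x : H) = 0 := by rw [hxH, hc0, hβ0, hα0]; simp
    exact_mod_cast this
end

section
/- (Construction of f*, part (b).) Let H be a real Hilbert space, D ⊆ H a subspace, and U : D → H a linear map. Let f ∈ D with f ≠ 0, and assume: (i) {x ∈ D : Ux = 0} = span{f}; (ii) ⟨Ux, f⟩ = 0 for every x ∈ D. Let h₁, h₂ ∈ H be such that {f, h₁, h₂} is linearly independent, define h̃_j = h_j − (⟨h_j, f⟩/⟨f, f⟩) f, and assume there exist h₁*, h₂* ∈ D with ⟨h_j*, f⟩ = 0 and U h_j* = h̃_j for j = 1, 2. Define V : H → H by Vv = ⟨v, h₁⟩ h₂ + ⟨v, h₂⟩ h₁, T = U + V, and let M be the 3×3 matrix with entries M_{i1} = ⟨Vf, g_i⟩, M_{i2} = ⟨h̃₁ + V h₁*, g_i⟩, M_{i3} = ⟨h̃₂ + V h₂*, g_i⟩, where g₁ = f, g₂ = h̃₁, g₃ = h̃₂.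 Then for f* ∈ D, the equation T f* = f holds if and only if there exist β, γ₁, γ₂ ∈ ℝ such that f* = β f + γ₁ h₁* + γ₂ h₂* and M (β, γ₁, γ₂)ᵀ = (⟨f, f⟩, 0, 0)ᵀ. -/
/-- (Construction of f*, part (b)). `T f* = f` holds if and only
if `f* = β f + γ₁ h₁* + γ₂ h₂*` where the coefficients solve the linear system
`M (β,γ₁,γ₂)ᵀ = (⟨f,f⟩,0,0)ᵀ`. -/
theorem construction_fstar_b {H : Type*} [NormedAddCommGroup H] [InnerProductSpace ℝ H]
    [CompleteSpace H]
    (D : Submodule ℝ H) (U : D →ₗ[ℝ] H)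
    (f : D) (hf0 : (f : H) ≠ 0)
    (hker : ∀ x : D, U x = 0 ↔ ∃ c : ℝ, (x : H) = c • (f : H))
    (hran : ∀ x : D, (inner ℝ (U x) (f : H) : ℝ) = 0)
    (h₁ h₂ : H) (hind : LinearIndependent ℝ ![(f : H), h₁, h₂])
    (ht₁ ht₂ : H)
    (hht₁ : ht₁ = h₁ - (((inner ℝ h₁ (f : H) : ℝ) / (inner ℝ (f : H) (f : H) : ℝ)) • (f : H)))
    (hht₂ : ht₂ = h₂ - (((inner ℝ h₂ (f : H) : ℝ) / (inner ℝ (f : H) (f : H) : ℝ)) • (f : H)))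
    (h₁s h₂s : D)
    (h₁sorth : (inner ℝ (h₁s : H) (f : H) : ℝ) = 0) (hUh₁s : U h₁s = ht₁)
    (h₂sorth : (inner ℝ (h₂s : H) (f : H) : ℝ) = 0) (hUh₂s : U h₂s = ht₂)
    (V : H → H) (hV : ∀ v : H, V v = (inner ℝ v h₁ : ℝ) • h₂ + (inner ℝ v h₂ : ℝ) • h₁)
    (M : Matrix (Fin 3) (Fin 3) ℝ)
    (hM : M = Matrix.of fun i j =>
      (inner ℝ (![V (f : H), ht₁ + V (h₁s : H), ht₂ + V (h₂s : H)] j)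
        (![(f : H), ht₁, ht₂] i) : ℝ))
    (fstar : D) :
    U fstar + V (fstar : H) = (f : H) ↔
      ∃ β γ₁ γ₂ : ℝ, (fstar : H) = β • (f : H) + γ₁ • (h₁s : H) + γ₂ • (h₂s : H) ∧
        M.mulVec ![β, γ₁, γ₂] = ![(inner ℝ (f : H) (f : H) : ℝ), 0, 0] := by
  have hff : (inner ℝ (f : H) (f : H) : ℝ) ≠ 0 := fun h => hf0 (inner_self_eq_zero.mp h)
  have hUf : U f = 0 := (hker f).mpr ⟨1, (one_smul ℝ _).symm⟩
  have hot1 : (inner ℝ ht₁ (f : H) : ℝ) = 0 := by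
    rw [hht₁, inner_sub_left, real_inner_smul_left]
    field_simp
    ring
  have hot2 : (inner ℝ ht₂ (f : H) : ℝ) = 0 := by
    rw [hht₂, inner_sub_left, real_inner_smul_left]
    field_simp
    ring
  have hh₁ : h₁ = ht₁ + ((inner ℝ h₁ (f : H) : ℝ) / (inner ℝ (f : H) (f : H) : ℝ)) • (f : H) := by
    rw [hht₁]; abel
  have hh₂ : h₂ = ht₂ + ((inner ℝ h₂ (f : H) : ℝ) / (inner ℝ (f : H) (f : H) : ℝ)) • (f : H) := by
    rw [hht₂]; abel
  -- V x expressed in the span of f, ht₁, ht₂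
  have hVspan : ∀ x : H, V x =
      ((inner ℝ x h₁ : ℝ) * ((inner ℝ h₂ (f : H) : ℝ) / (inner ℝ (f : H) (f : H) : ℝ)) +
        (inner ℝ x h₂ : ℝ) * ((inner ℝ h₁ (f : H) : ℝ) / (inner ℝ (f : H) (f : H) : ℝ))) • (f : H) +
      (inner ℝ x h₂ : ℝ) • ht₁ + (inner ℝ x h₁ : ℝ) • ht₂ := by
    intro x
    rw [hV, hht₁, hht₂]
    module
  -- a vector in span{f, ht₁, ht₂} orthogonal to all three generators is zero
  have key : ∀ x : H, (∃ a b c : ℝ, x = a • (f : H) + b • ht₁ + c • ht₂) →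
      (inner ℝ x (f : H) : ℝ) = 0 → (inner ℝ x ht₁ : ℝ) = 0 → (inner ℝ x ht₂ : ℝ) = 0 → x = 0 := by
    rintro x ⟨a, b, c, rfl⟩ hx1 hx2 hx3
    have ha : a = 0 := by
      simp only [inner_add_left, real_inner_smul_left, hot1, hot2, mul_zero, add_zero] at hx1
      exact (mul_eq_zero.mp hx1).resolve_right hff
    subst ha
    simp only [zero_smul, zero_add] at hx2 hx3 ⊢
    have hxx : (inner ℝ (b • ht₁ + c • ht₂) (b • ht₁ + c • ht₂) : ℝ) = 0 := by
      rw [inner_add_right, real_inner_smul_right, real_inner_smul_right, hx2, hx3]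
      ring
    exact inner_self_eq_zero.mp hxx
  -- linearity of V on triples
  have hVl : ∀ (β γ₁ γ₂ : ℝ) (x y z : H),
      V (β • x + γ₁ • y + γ₂ • z) = β • V x + γ₁ • V y + γ₂ • V z := by
    intro β γ₁ γ₂ x y z
    simp only [hV, inner_add_left, real_inner_smul_left]
    module
  -- value of T on a combination
  have hT : ∀ β γ₁ γ₂ : ℝ, (fstar : H) = β • (f : H) + γ₁ • (h₁s : H) + γ₂ • (h₂s : H) →
      U fstar + V (fstar : H) =
        β • V (f : H) + γ₁ • (ht₁ + V (h₁s : H)) + γ₂ • (ht₂ + V (h₂s : H)) := by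
    intro β γ₁ γ₂ hfs
    have hfd : fstar = β • f + γ₁ • h₁s + γ₂ • h₂s := Subtype.ext (by push_cast; exact hfs)
    rw [hfd]
    simp only [map_add, map_smul, hUf, hUh₁s, hUh₂s, smul_zero, Submodule.coe_add,
      SetLike.val_smul]
    rw [hVl]
    module
  -- mulVec entries as inner ℝ products
  have hmv : ∀ (β γ₁ γ₂ : ℝ) (i : Fin 3),
      M.mulVec ![β, γ₁, γ₂] i =
        (inner ℝ (β • V (f : H) + γ₁ • (ht₁ + V (h₁s : H)) + γ₂ • (ht₂ + V (h₂s : H)))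
          (![(f : H), ht₁, ht₂] i) : ℝ) := by
    intro β γ₁ γ₂ i
    rw [hM]
    simp [Matrix.mulVec, dotProduct, Fin.sum_univ_three, inner_add_left,
      real_inner_smul_left]
    ring
  have hfg : ∀ i : Fin 3, (inner ℝ (f : H) (![(f : H), ht₁, ht₂] i) : ℝ) =
      ![(inner ℝ (f : H) (f : H) : ℝ), 0, 0] i := by
    intro i
    fin_cases i
    · rfl
    · simpa [real_inner_comm] using hot1
    · simpa [real_inner_comm] using hot2
  constructor
  · -- forward direction
    intro hTf
    have hUfs : U fstar = (f : H) - V (fstar : H) := eq_sub_of_add_eq hTf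
    have hr := hran fstar
    rw [hUfs, inner_sub_left, hV, inner_add_left, real_inner_smul_left,
      real_inner_smul_left] at hr
    have hone : (inner ℝ (fstar : H) h₁ : ℝ) *
          ((inner ℝ h₂ (f : H) : ℝ) / (inner ℝ (f : H) (f : H) : ℝ)) +
        (inner ℝ (fstar : H) h₂ : ℝ) *
          ((inner ℝ h₁ (f : H) : ℝ) / (inner ℝ (f : H) (f : H) : ℝ)) = 1 := by
      field_simp
      linarith
    have hU3 : U fstar = (-(inner ℝ (fstar : H) h₂ : ℝ)) • ht₁ +
        (-(inner ℝ (fstar : H) h₁ : ℝ)) • ht₂ := by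
      rw [hUfs, hVspan (fstar : H), hone, one_smul]
      module
    have hUy : U (fstar - ((inner ℝ (fstar : H) (f : H) : ℝ) / (inner ℝ (f : H) (f : H) : ℝ)) • f +
        (inner ℝ (fstar : H) h₂ : ℝ) • h₁s + (inner ℝ (fstar : H) h₁ : ℝ) • h₂s) = 0 := by
      simp only [map_add, map_sub, map_smul, hUf, hUh₁s, hUh₂s, smul_zero, hU3]
      module
    obtain ⟨c, hc⟩ := (hker _).mp hUy
    simp only [Submodule.coe_add, Submodule.coe_sub, SetLike.val_smul] at hc
    have h5 : (inner ℝ ((fstar : H) -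
        ((inner ℝ (fstar : H) (f : H) : ℝ) / (inner ℝ (f : H) (f : H) : ℝ)) • (f : H) +
        (inner ℝ (fstar : H) h₂ : ℝ) • (h₁s : H) + (inner ℝ (fstar : H) h₁ : ℝ) • (h₂s : H))
        (f : H) : ℝ) = c * (inner ℝ (f : H) (f : H) : ℝ) := by
      rw [hc, real_inner_smul_left]
    rw [inner_add_left, inner_add_left, inner_sub_left, real_inner_smul_left,
      real_inner_smul_left, real_inner_smul_left, h₁sorth, h₂sorth] at h5
    have hc0 : c = 0 := by
      have hcz : c * (inner ℝ (f : H) (f : H) : ℝ) = 0 := by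
        rw [← h5]
        field_simp
        ring
      exact (mul_eq_zero.mp hcz).resolve_right hff
    rw [hc0, zero_smul] at hc
    have hfs : (fstar : H) =
        ((inner ℝ (fstar : H) (f : H) : ℝ) / (inner ℝ (f : H) (f : H) : ℝ)) • (f : H) +
        (-(inner ℝ (fstar : H) h₂ : ℝ)) • (h₁s : H) + (-(inner ℝ (fstar : H) h₁ : ℝ)) • (h₂s : H) := by
      have h6 : (fstar : H) =
          ((fstar : H) -
            ((inner ℝ (fstar : H) (f : H) : ℝ) / (inner ℝ (f : H) (f : H) : ℝ)) • (f : H) +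
            (inner ℝ (fstar : H) h₂ : ℝ) • (h₁s : H) + (inner ℝ (fstar : H) h₁ : ℝ) • (h₂s : H)) +
          (((inner ℝ (fstar : H) (f : H) : ℝ) / (inner ℝ (f : H) (f : H) : ℝ)) • (f : H) +
            (-(inner ℝ (fstar : H) h₂ : ℝ)) • (h₁s : H) +
            (-(inner ℝ (fstar : H) h₁ : ℝ)) • (h₂s : H)) := by module
      nth_rewrite 1 [h6]
      rw [hc, zero_add]
    refine ⟨_, _, _, hfs, ?_⟩
    funext i
    rw [hmv _ _ _ i, ← hT _ _ _ hfs, hTf, hfg]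
  · -- backward direction
    rintro ⟨β, γ₁, γ₂, hfs, hMv⟩
    have hTv := hT β γ₁ γ₂ hfs
    have hz : ∀ i : Fin 3,
        (inner ℝ (U fstar + V (fstar : H) - (f : H)) (![(f : H), ht₁, ht₂] i) : ℝ) = 0 := by
      intro i
      rw [inner_sub_left, hTv, ← hmv β γ₁ γ₂ i, hMv, ← hfg, sub_self]
    have hmem : ∃ a b c : ℝ, U fstar + V (fstar : H) - (f : H) =
        a • (f : H) + b • ht₁ + c • ht₂ := by
      refine ⟨β * ((inner ℝ (f:H) h₁ : ℝ) * ((inner ℝ h₂ (f:H) : ℝ) / (inner ℝ (f:H) (f:H) : ℝ)) +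
              (inner ℝ (f:H) h₂ : ℝ) * ((inner ℝ h₁ (f:H) : ℝ) / (inner ℝ (f:H) (f:H) : ℝ))) +
          γ₁ * ((inner ℝ (h₁s:H) h₁ : ℝ) * ((inner ℝ h₂ (f:H) : ℝ) / (inner ℝ (f:H) (f:H) : ℝ)) +
              (inner ℝ (h₁s:H) h₂ : ℝ) * ((inner ℝ h₁ (f:H) : ℝ) / (inner ℝ (f:H) (f:H) : ℝ))) +
          γ₂ * ((inner ℝ (h₂s:H) h₁ : ℝ) * ((inner ℝ h₂ (f:H) : ℝ) / (inner ℝ (f:H) (f:H) : ℝ)) +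
              (inner ℝ (h₂s:H) h₂ : ℝ) * ((inner ℝ h₁ (f:H) : ℝ) / (inner ℝ (f:H) (f:H) : ℝ))) - 1,
        β * (inner ℝ (f:H) h₂ : ℝ) + γ₁ + γ₁ * (inner ℝ (h₁s:H) h₂ : ℝ) +
          γ₂ * (inner ℝ (h₂s:H) h₂ : ℝ),
        β * (inner ℝ (f:H) h₁ : ℝ) + γ₁ * (inner ℝ (h₁s:H) h₁ : ℝ) + γ₂ +
          γ₂ * (inner ℝ (h₂s:H) h₁ : ℝ), ?_⟩
      rw [hTv, hVspan (f : H), hVspan (h₁s : H), hVspan (h₂s : H)]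
      module
    have hzero := key _ hmem (by simpa using hz 0) (by simpa using hz 1) (by simpa using hz 2)
    exact sub_eq_zero.mp hzero
end

section
/- (Ground-state positivity for the radial operator U.) Let W : (0, ∞) → ℝ be continuous and let φ : (0, ∞) → ℝ be twice continuously differentiable with φ(r) > 0 for all r > 0 and −φ''(r) − φ'(r)/r + (1/r² + 1 − W(r)) φ(r) = 0 on (0, ∞). Then the quadratic form of U = −∂_r² − (1/r)∂_r + 1/r² + 1 − W on L²((0,∞), r dr) is nonnegative on compactly supported smooth functions: for every v ∈ C_c^∞((0,∞)), ∫₀^∞ [ v'(r)² + (1/r² + 1 − W(r)) v(r)² ] r dr ≥ 0. -/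
open MeasureTheory

/-- ground-state positivity for the radial operator
`U = -∂_r² - (1/r)∂_r + 1/r² + 1 - W` on `L²((0,∞), r dr)`: if the kernel of
`U` contains a positive function, then the quadratic form of `U` is
nonnegative on compactly supported smooth test functions. -/
theorem radial_ground_state_positivity (W : ℝ → ℝ) (hW : ContinuousOn W (Set.Ioi 0))
    (φ : ℝ → ℝ) (hφ : ContDiffOn ℝ 2 φ (Set.Ioi 0))
    (hφpos : ∀ r : ℝ, 0 < r → 0 < φ r)
    (hode : ∀ r : ℝ, 0 < r →
      -deriv (deriv φ) r - deriv φ r / r + (1 / r ^ 2 + 1 - W r) * φ r = 0) :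
    ∀ v : ℝ → ℝ, ContDiff ℝ (⊤ : ℕ∞) v → HasCompactSupport v → tsupport v ⊆ Set.Ioi 0 →
      0 ≤ ∫ r in Set.Ioi (0 : ℝ),
        (deriv v r ^ 2 + (1 / r ^ 2 + 1 - W r) * v r ^ 2) * r := by
  intro v hv hvc hvs
  set Q : ℝ → ℝ := fun r => 1 / r ^ 2 + 1 - W r with hQdef
  set F : ℝ → ℝ := fun r => (deriv v r ^ 2 + Q r * v r ^ 2) * r with hFdef
  show 0 ≤ ∫ r in Set.Ioi (0 : ℝ), F r
  by_cases hK : (tsupport v).Nonempty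
  swap
  · -- v ≡ 0
    have hv0 : v = fun _ => (0 : ℝ) := by
      funext r
      by_contra h
      exact hK ⟨r, subset_tsupport v h⟩
    have : ∀ r, F r = 0 := by
      intro r; simp [hFdef, hv0]
    simp [this]
  -- nontrivial case
  have hKc : IsCompact (tsupport v) := hvc
  set a := sInf (tsupport v) with hadef
  set b := sSup (tsupport v) with hbdef
  have haK : a ∈ tsupport v := hKc.sInf_mem hK
  have ha : 0 < a := hvs haK
  have hab : a ≤ b := csInf_le_csSup hK hKc.bddBelow hKc.bddAbove
  set a' : ℝ := a / 2 with ha'def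
  set b' : ℝ := b + 1 with hb'def
  have ha' : 0 < a' := by positivity
  have hab' : a' ≤ b' := by simp only [ha'def, hb'def]; linarith
  have hsubK : tsupport v ⊆ Set.Icc a' b' := by
    intro x hx
    have h1 : a ≤ x := csInf_le hKc.bddBelow hx
    have h2 : x ≤ b := le_csSup hKc.bddAbove hx
    exact ⟨by simp only [ha'def]; linarith, by simp only [hb'def]; linarith⟩
  have hIcc : Set.Icc a' b' ⊆ Set.Ioi (0 : ℝ) := fun x hx => lt_of_lt_of_le ha' hx.1
  have huIcc : Set.uIcc a' b' = Set.Icc a' b' := Set.uIcc_of_le hab'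
  have ha'K : a' ∉ tsupport v := by
    intro h
    have := csInf_le hKc.bddBelow h
    simp only [ha'def] at this; linarith
  have hb'K : b' ∉ tsupport v := by
    intro h
    have := le_csSup hKc.bddAbove h
    simp only [hb'def] at this; linarith
  have hva' : v a' = 0 := image_eq_zero_of_notMem_tsupport ha'K
  have hvb' : v b' = 0 := image_eq_zero_of_notMem_tsupport hb'K
  -- derivative facts
  have hφne : ∀ r ∈ Set.Ioi (0:ℝ), φ r ≠ 0 := fun r hr => (hφpos r hr).ne'
  have hφd : ∀ r ∈ Set.Ioi (0:ℝ), HasDerivAt φ (deriv φ r) r := by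
    intro r hr
    exact ((hφ.contDiffAt (isOpen_Ioi.mem_nhds hr)).differentiableAt
      (by norm_num)).hasDerivAt
  have hφ1 : ContDiffOn ℝ 1 (deriv φ) (Set.Ioi 0) :=
    hφ.deriv_of_isOpen isOpen_Ioi (by norm_num)
  have hφ'd : ∀ r ∈ Set.Ioi (0:ℝ), HasDerivAt (deriv φ) (deriv (deriv φ) r) r := by
    intro r hr
    exact ((hφ1.contDiffAt (isOpen_Ioi.mem_nhds hr)).differentiableAt one_ne_zero).hasDerivAt
  have hvd : ∀ r : ℝ, HasDerivAt v (deriv v r) r := fun r =>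
    ((hv.differentiable (by simp)) r).hasDerivAt
  set u : ℝ → ℝ := fun r => v r / φ r with hudef
  set du : ℝ → ℝ := fun r => (deriv v r * φ r - v r * deriv φ r) / φ r ^ 2 with hdudef
  set g : ℝ → ℝ := fun r => r * φ r * deriv φ r * u r ^ 2 with hgdef
  set G : ℝ → ℝ := fun r =>
    ((1 * φ r + r * deriv φ r) * deriv φ r + r * φ r * deriv (deriv φ) r) * u r ^ 2
      + r * φ r * deriv φ r * (2 * u r * du r) with hGdef
  set P : ℝ → ℝ := fun r => r * φ r ^ 2 * du r ^ 2 with hPdef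
  have hud : ∀ r ∈ Set.Ioi (0:ℝ), HasDerivAt u (du r) r := by
    intro r hr
    exact (hvd r).div (hφd r hr) (hφne r hr)
  have hgd : ∀ r ∈ Set.Ioi (0:ℝ), HasDerivAt g (G r) r := by
    intro r hr
    have h1 : HasDerivAt (fun s : ℝ => s * φ s * deriv φ s)
        ((1 * φ r + r * deriv φ r) * deriv φ r + r * φ r * deriv (deriv φ) r) r :=
      ((hasDerivAt_id r).mul (hφd r hr)).mul (hφ'd r hr)
    have h2 : HasDerivAt (fun s => u s ^ 2) (2 * u r * du r) r := by
      simpa [mul_comm] using (hud r hr).fun_pow 2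
    exact h1.mul h2
  -- key pointwise identity
  have key : ∀ r ∈ Set.Ioi (0:ℝ), F r = P r + G r := by
    intro r hr
    have hr0 : (0:ℝ) < r := hr
    have hrne : r ≠ 0 := ne_of_gt hr0
    have hφn : φ r ≠ 0 := hφne r hr
    have hQr : Q r = (deriv (deriv φ) r + deriv φ r / r) / φ r := by
      rw [eq_div_iff hφn]
      have := hode r hr0
      simp only [hQdef]
      linarith
    simp only [hFdef, hPdef, hGdef, hudef, hdudef, hQr]
    field_simp
    ring
  -- F vanishes off [a', b']
  have hFz : ∀ r, r ∉ Set.Icc a' b' → F r = 0 := by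
    intro r hrI
    have hrK : r ∉ tsupport v := fun h => hrI (hsubK h)
    have hv0 : v r = 0 := image_eq_zero_of_notMem_tsupport hrK
    have hdv0 : deriv v r = 0 := by
      by_contra h
      exact hrK (support_deriv_subset (by simpa [Function.mem_support] using h))
    simp [hFdef, hv0, hdv0]
  -- reduce to an interval integral
  have h1 : ∫ r in Set.Ioi (0:ℝ), F r = ∫ r in a'..b', F r := by
    rw [setIntegral_eq_integral_of_forall_compl_eq_zero
      (fun x hx => hFz x (fun hxI => hx (hIcc hxI))),
      ← setIntegral_eq_integral_of_forall_compl_eq_zero hFz,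
      intervalIntegral.integral_of_le hab', ← integral_Icc_eq_integral_Ioc]
  -- continuity on Ioi 0
  have hcφ : ContinuousOn φ (Set.Ioi 0) := hφ.continuousOn
  have hcφ' : ContinuousOn (deriv φ) (Set.Ioi 0) :=
    hφ.continuousOn_deriv_of_isOpen isOpen_Ioi (by norm_num)
  have hcφ'' : ContinuousOn (deriv (deriv φ)) (Set.Ioi 0) :=
    hφ1.continuousOn_deriv_of_isOpen isOpen_Ioi le_rfl
  have hcv : ContinuousOn v (Set.Ioi 0) := hv.continuous.continuousOn
  have hcdv : ContinuousOn (deriv v) (Set.Ioi 0) :=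
    (hv.continuous_deriv (by simp)).continuousOn
  have hcu : ContinuousOn u (Set.Ioi 0) := hcv.div hcφ hφne
  have hcdu : ContinuousOn du (Set.Ioi 0) :=
    ((hcdv.mul hcφ).sub (hcv.mul hcφ')).div (hcφ.pow 2)
      (fun r hr => pow_ne_zero 2 (hφne r hr))
  have hcP : ContinuousOn P (Set.Ioi 0) :=
    (continuous_id.continuousOn.mul (hcφ.pow 2)).mul (hcdu.pow 2)
  have hcG : ContinuousOn G (Set.Ioi 0) := by
    apply ContinuousOn.add
    · exact (((continuous_const.continuousOn.mul hcφ).add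
        (continuous_id.continuousOn.mul hcφ')).mul hcφ' |>.add
        ((continuous_id.continuousOn.mul hcφ).mul hcφ'')).mul (hcu.pow 2)
    · exact ((continuous_id.continuousOn.mul hcφ).mul hcφ').mul
        ((continuous_const.continuousOn.mul hcu).mul hcdu)
  have hsub' : Set.uIcc a' b' ⊆ Set.Ioi (0:ℝ) := by rw [huIcc]; exact hIcc
  have hIP : IntervalIntegrable P volume a' b' :=
    (hcP.mono hsub').intervalIntegrable
  have hIG : IntervalIntegrable G volume a' b' :=
    (hcG.mono hsub').intervalIntegrable
  have hFPG : ∫ x in a'..b', F x = (∫ x in a'..b', P x) + ∫ x in a'..b', G x := by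
    rw [← intervalIntegral.integral_add hIP hIG]
    apply intervalIntegral.integral_congr
    intro x hx
    exact key x (hsub' hx)
  have hGint : ∫ x in a'..b', G x = g b' - g a' :=
    intervalIntegral.integral_eq_sub_of_hasDerivAt
      (fun x hx => hgd x (hsub' hx)) hIG
  have hga : g a' = 0 := by simp [hgdef, hudef, hva']
  have hgb : g b' = 0 := by simp [hgdef, hudef, hvb']
  have hPnn : 0 ≤ ∫ x in a'..b', P x := by
    apply intervalIntegral.integral_nonneg hab'
    intro x hx
    have hx0 : (0:ℝ) ≤ x := le_of_lt (hIcc hx)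
    exact mul_nonneg (mul_nonneg hx0 (sq_nonneg _)) (sq_nonneg _)
  rw [h1, hFPG, hGint, hga, hgb]
  linarith
end

section
/- (First Pokhozhaev identity.) Let p > 1 and let Q : ℝ² → ℝ be a Schwartz-class function solving ΔQ − Q + |Q|^{p−1} Q = 0 on ℝ², where Δ = ∂_x² + ∂_y². Then ∫_{ℝ²} |∇Q|² dx dy = ((p−1)/2) ∫_{ℝ²} Q² dx dy. -/
open MeasureTheory Real

noncomputable def pdx (f : ℝ × ℝ → ℝ) (z : ℝ × ℝ) : ℝ := fderiv ℝ f z (1, 0)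
noncomputable def pdy (f : ℝ × ℝ → ℝ) (z : ℝ × ℝ) : ℝ := fderiv ℝ f z (0, 1)
noncomputable def lap (f : ℝ × ℝ → ℝ) (z : ℝ × ℝ) : ℝ := pdx (pdx f) z + pdy (pdy f) z
noncomputable def ip (f g : ℝ × ℝ → ℝ) : ℝ := ∫ z : ℝ × ℝ, f z * g z
def IsSchwartz (f : ℝ × ℝ → ℝ) : Prop := ∃ g : SchwartzMap (ℝ × ℝ) ℝ, ∀ z, g z = f z

noncomputable def linL (p : ℝ) (Q f : ℝ × ℝ → ℝ) (z : ℝ × ℝ) : ℝ :=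
  -lap f z + f z - p * Q z ^ (p - 1) * f z

noncomputable def lamQ (p : ℝ) (Q : ℝ × ℝ → ℝ) (z : ℝ × ℝ) : ℝ :=
  2 / (p - 1) * Q z + z.1 * pdx Q z + z.2 * pdy Q z

structure IsGroundState (p : ℝ) (Q : ℝ × ℝ → ℝ) : Prop where
  schwartz : IsSchwartz Q
  pos : ∀ z, 0 < Q z
  radial : ∀ z w : ℝ × ℝ, ‖z‖ = ‖w‖ → Q z = Q w
  radDecr : ∀ z w : ℝ × ℝ, ‖z‖ ≤ ‖w‖ → Q w ≤ Q z
  solves : ∀ z, lap Q z - Q z + Q z ^ p = 0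

/-!
Write `N(t) = |t|^{p-1} t`, so the equation reads `∂₁²Q + ∂₂²Q = Q - N(Q)`. Pairing it with `Q`
and integrating by parts gives `∫ |∇Q|² = ∫ |Q|^{p+1} - ∫ Q²`. Pairing it with `x_i ∂_i Q` uses the
dilation identity `∫ x_i ∂_i (Φ ∘ Q) = -∫ Φ ∘ Q` (integration by parts against the coordinate
function), applied to `Φ(t) = t²` and `Φ(t) = |t|^{p+1}`; after summing over `i = 1, 2` the gradient
terms cancel, which is special to dimension two, and what is left is
`∫ |Q|^{p+1} = (p+1)/2 ∫ Q²`. Substituting into the first identity gives the claim.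
-/

open scoped LineDeriv
open SchwartzMap Set

namespace SchwartzMap

variable {E F : Type*} [NormedAddCommGroup E] [NormedSpace ℝ E]
  [NormedAddCommGroup F] [NormedSpace ℝ F]

theorem lineDerivOp_comm (f : 𝓢(E, F)) (u v : E) : ∂_{u} (∂_{v} f) = ∂_{v} (∂_{u} f) := by
  ext x
  have hsymm : IsSymmSndFDerivAt ℝ f x :=
    (f.smooth 2).contDiffAt.isSymmSndFDerivAt (by simp)
  have key : ∀ a b : E, ∂_{a} (∂_{b} f) x = iteratedFDeriv ℝ 2 f x ![a, b] := fun a b => by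
    rw [← iteratedLineDerivOp_eq_iteratedFDeriv]
    simp [LineDeriv.iteratedLineDerivOp_succ_left]
  rw [key, key, hsymm.iteratedFDeriv_cons]

theorem lineDerivOp_smulLeftCLM_apply {g : E → ℝ} (hg : g.HasTemperateGrowth) (f : 𝓢(E, ℝ))
    (u x : E) : ∂_{u} (smulLeftCLM ℝ g f) x = fderiv ℝ g x u * f x + g x * ∂_{u} f x := by
  have hF : HasFDerivAt (fun y => g y * f y) (g x • fderiv ℝ f x + f x • fderiv ℝ g x) x :=
    (hg.1.differentiable (by simp) x).hasFDerivAt.mul (f.hasFDerivAt x)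
  rw [lineDerivOp_apply_eq_fderiv, smulLeftCLM_apply hg]
  simp only [smul_eq_mul]
  rw [hF.fderiv]
  simp [lineDerivOp_apply_eq_fderiv]
  ring

theorem mem_Icc_seminorm (f : 𝓢(E, ℝ)) (x : E) :
    f x ∈ Icc (-SchwartzMap.seminorm ℝ 0 0 f) (SchwartzMap.seminorm ℝ 0 0 f) :=
  abs_le.mp (f.norm_le_seminorm ℝ x)

theorem exists_bound_comp (f : 𝓢(E, ℝ)) {Ψ : ℝ → ℝ} (hΨ : Continuous Ψ) :
    ∃ C, ∀ x, ‖Ψ (f x)‖ ≤ C := by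
  obtain ⟨C, hC⟩ := isCompact_Icc.exists_bound_of_continuousOn hΨ.continuousOn
  exact ⟨C, fun x => hC _ (f.mem_Icc_seminorm x)⟩

end SchwartzMap

section Nonlinearity

variable {p : ℝ}

theorem contDiff_abs_rpow {q : ℝ} (hq : 1 < q) : ContDiff ℝ 1 fun t : ℝ => |t| ^ q := by
  simpa using contDiff_norm_rpow (E := ℝ) hq

theorem hasDerivAt_abs_rpow_add_one (hp : 0 < p) (t : ℝ) :
    HasDerivAt (fun t => |t| ^ (p + 1)) ((p + 1) * (|t| ^ (p - 1) * t)) t := by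
  convert hasDerivAt_abs_rpow t (by linarith : 1 < p + 1) using 1
  ring_nf

theorem continuous_abs_rpow_sub_one_mul (hp : 0 < p) :
    Continuous fun t : ℝ => |t| ^ (p - 1) * t := by
  have h := (contDiff_abs_rpow (by linarith : 1 < p + 1)).continuous_deriv le_rfl
  rw [funext fun t => (hasDerivAt_abs_rpow_add_one hp t).deriv] at h
  simpa [(by linarith : p + 1 ≠ 0)] using h.div_const (p + 1)

theorem mul_abs_rpow_sub_one_mul_self (hp : 0 < p) (t : ℝ) :
    t * (|t| ^ (p - 1) * t) = |t| ^ (p + 1) := by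
  rw [mul_left_comm, ← sq, ← sq_abs, ← Real.rpow_natCast,
    ← Real.rpow_add' (abs_nonneg t) (by push_cast; linarith)]
  norm_num
  ring_nf

end Nonlinearity

section Integration

variable {D : Type*} [NormedAddCommGroup D] [NormedSpace ℝ D] [FiniteDimensional ℝ D]
  [MeasurableSpace D] [BorelSpace D] {μ : Measure D} [μ.IsAddHaarMeasure]

theorem SchwartzMap.integrable_clm_mul (ℓ : D →L[ℝ] ℝ) (f : 𝓢(D, ℝ)) :
    Integrable (fun x => ℓ x * f x) μ := by
  refine ((smulLeftCLM ℝ ℓ f).integrable (μ := μ)).congr (ae_of_all _ fun x => ?_)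
  simp [smulLeftCLM_apply_apply ℓ.hasTemperateGrowth]

theorem SchwartzMap.integrable_mul_comp (f h : 𝓢(D, ℝ)) {Ψ : ℝ → ℝ} (hΨ : Continuous Ψ) :
    Integrable (fun x => f x * Ψ (h x)) μ :=
  let ⟨_, hC⟩ := h.exists_bound_comp hΨ
  f.integrable.mul_bdd (hΨ.comp h.continuous).aestronglyMeasurable (ae_of_all _ hC)

theorem SchwartzMap.integrable_clm_mul_mul_comp (ℓ : D →L[ℝ] ℝ) (f h : 𝓢(D, ℝ)) {Ψ : ℝ → ℝ}
    (hΨ : Continuous Ψ) : Integrable (fun x => ℓ x * f x * Ψ (h x)) μ :=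
  let ⟨_, hC⟩ := h.exists_bound_comp hΨ
  (integrable_clm_mul ℓ f).mul_bdd (hΨ.comp h.continuous).aestronglyMeasurable (ae_of_all _ hC)

theorem integral_clm_mul_fderiv (ℓ : D →L[ℝ] ℝ) (v : D) {F : D → ℝ} (hF : Differentiable ℝ F)
    (hFi : Integrable F μ) (hℓF : Integrable (fun x => ℓ x * F x) μ)
    (hℓF' : Integrable (fun x => ℓ x * fderiv ℝ F x v) μ) :
    ∫ x, ℓ x * fderiv ℝ F x v ∂μ = -(ℓ v * ∫ x, F x ∂μ) := by
  have hℓ' : Integrable (fun x => fderiv ℝ ℓ x v * F x) μ := by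
    simpa only [ContinuousLinearMap.fderiv] using hFi.const_mul (ℓ v)
  rw [integral_mul_fderiv_eq_neg_fderiv_mul_of_integrable hℓ' hℓF' hℓF
    (fun x _ => ℓ.differentiableAt) (fun x _ => hF x)]
  simp only [ContinuousLinearMap.fderiv, integral_const_mul]

theorem integral_clm_mul_lineDerivOp_mul_deriv_comp (ℓ : D →L[ℝ] ℝ) (v : D) {Φ : ℝ → ℝ}
    (hΦ : ContDiff ℝ 1 Φ) (hΦ0 : Φ 0 = 0) (f : 𝓢(D, ℝ)) :
    ∫ x, ℓ x * ∂_{v} f x * deriv Φ (f x) ∂μ = -(ℓ v * ∫ x, Φ (f x) ∂μ) := by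
  have hΦd : Differentiable ℝ Φ := hΦ.differentiable one_ne_zero
  have hfd : ∀ x, fderiv ℝ (fun y => Φ (f y)) x v = ∂_{v} f x * deriv Φ (f x) := fun x => by
    change fderiv ℝ (Φ ∘ f) x v = _
    rw [((hΦd _).hasDerivAt.comp_hasFDerivAt x (f.hasFDerivAt x)).fderiv]
    simp [lineDerivOp_apply_eq_fderiv, mul_comm]
  obtain ⟨K, hK⟩ := hΦ.contDiffOn.exists_lipschitzOnWith one_ne_zero (convex_Icc _ _)
    (isCompact_Icc (a := -SchwartzMap.seminorm ℝ 0 0 f) (b := SchwartzMap.seminorm ℝ 0 0 f))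
  have hΦf : ∀ x, ‖Φ (f x)‖ ≤ K * ‖f x‖ := fun x => by
    have h0 : (0 : ℝ) ∈ Icc (-SchwartzMap.seminorm ℝ 0 0 f) (SchwartzMap.seminorm ℝ 0 0 f) := by
      simp [apply_nonneg]
    simpa [hΦ0, dist_eq_norm] using hK.dist_le_mul _ (f.mem_Icc_seminorm x) 0 h0
  have hcont : Continuous fun x => Φ (f x) := hΦ.continuous.comp f.continuous
  have hFi : Integrable (fun x => Φ (f x)) μ :=
    (f.integrable.norm.const_mul K).mono' hcont.aestronglyMeasurable (ae_of_all _ hΦf)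
  have hℓF : Integrable (fun x => ℓ x * Φ (f x)) μ := by
    refine ((integrable_clm_mul ℓ f).norm.const_mul K).mono'
      (ℓ.continuous.mul hcont).aestronglyMeasurable (ae_of_all _ fun x => ?_)
    rw [norm_mul, norm_mul, mul_left_comm]
    exact mul_le_mul_of_nonneg_left (hΦf x) (norm_nonneg _)
  have hℓF' : Integrable (fun x => ℓ x * fderiv ℝ (fun y => Φ (f y)) x v) μ := by
    simpa only [hfd, mul_assoc] using
      integrable_clm_mul_mul_comp (μ := μ) ℓ (∂_{v} f) f (hΦ.continuous_deriv le_rfl)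
  rw [← integral_clm_mul_fderiv (F := fun y => Φ (f y)) ℓ v (hΦd.comp f.differentiable)
    hFi hℓF hℓF']
  simp only [hfd, mul_assoc]

theorem integral_clm_mul_lineDerivOp_mul_self (ℓ : D →L[ℝ] ℝ) (v : D) (f : 𝓢(D, ℝ)) :
    ∫ x, ℓ x * ∂_{v} f x * f x ∂μ = -(ℓ v / 2 * ∫ x, f x ^ 2 ∂μ) := by
  have h := integral_clm_mul_lineDerivOp_mul_deriv_comp (μ := μ) (Φ := fun t => t ^ 2) ℓ v
    (contDiff_id.pow 2) (by simp) f
  have hd : ∀ t : ℝ, deriv (fun t : ℝ => t ^ 2) t = t * 2 := fun t => by simp [mul_comm]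
  simp only [hd, ← mul_assoc, integral_mul_const] at h
  linarith

theorem integral_clm_mul_lineDerivOp_mul_abs_rpow {p : ℝ} (hp : 0 < p) (ℓ : D →L[ℝ] ℝ) (v : D)
    (f : 𝓢(D, ℝ)) :
    ∫ x, ℓ x * ∂_{v} f x * (|f x| ^ (p - 1) * f x) ∂μ =
      -(ℓ v / (p + 1) * ∫ x, |f x| ^ (p + 1) ∂μ) := by
  have h := integral_clm_mul_lineDerivOp_mul_deriv_comp (μ := μ) ℓ v
    (contDiff_abs_rpow (by linarith : 1 < p + 1)) (by simp [(by linarith : p + 1 ≠ 0)]) f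
  simp only [fun t => (hasDerivAt_abs_rpow_add_one hp t).deriv, mul_left_comm _ (p + 1),
    integral_const_mul] at h
  rw [eq_comm, neg_eq_iff_eq_neg, div_mul_eq_mul_div, div_eq_iff (by linarith)]
  linarith

theorem integral_clm_mul_lineDerivOp_mul_lineDerivOp_lineDerivOp (ℓ : D →L[ℝ] ℝ) {u : D}
    (hℓu : ℓ u = 0) (v : D) (f : 𝓢(D, ℝ)) :
    ∫ x, ℓ x * ∂_{v} f x * ∂_{u} (∂_{u} f) x ∂μ = ℓ v / 2 * ∫ x, ∂_{u} f x ^ 2 ∂μ := by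
  -- Integrate by parts in `u`: since `ℓ u = 0` only `ℓ x * ∂_u ∂_v f x = ℓ x * ∂_v ∂_u f x`
  -- survives, which reduces to the dilation identity for `∂_u f`.
  have h := integral_mul_lineDerivOp_right_eq_neg_left (μ := μ)
    (smulLeftCLM ℝ ℓ (∂_{v} f)) (∂_{u} f) u
  simp only [smulLeftCLM_apply_apply ℓ.hasTemperateGrowth, smul_eq_mul,
    lineDerivOp_smulLeftCLM_apply ℓ.hasTemperateGrowth, ContinuousLinearMap.fderiv, hℓu,
    zero_mul, zero_add, lineDerivOp_comm f u v] at h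
  rw [h, integral_clm_mul_lineDerivOp_mul_self, neg_neg]

end Integration

section Pokhozhaev

variable {D : Type*} [NormedAddCommGroup D] [NormedSpace ℝ D] [FiniteDimensional ℝ D]
  [MeasurableSpace D] [BorelSpace D] {μ : Measure D} [μ.IsAddHaarMeasure]
  {p : ℝ} {u v : D} {f : 𝓢(D, ℝ)}

theorem integral_lineDerivOp_sq_add_integral_lineDerivOp_sq (hp : 0 < p)
    (hf : ∀ x, ∂_{v} (∂_{v} f) x + ∂_{u} (∂_{u} f) x = f x - |f x| ^ (p - 1) * f x) :
    ∫ x, ∂_{v} f x ^ 2 ∂μ + ∫ x, ∂_{u} f x ^ 2 ∂μ =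
      ∫ x, |f x| ^ (p + 1) ∂μ - ∫ x, f x ^ 2 ∂μ := by
  have hpair : ∫ x, f x * (∂_{v} (∂_{v} f) x + ∂_{u} (∂_{u} f) x) ∂μ =
      ∫ x, f x * (f x - |f x| ^ (p - 1) * f x) ∂μ := by
    simp only [hf]
  simp only [mul_add, mul_sub] at hpair
  rw [integral_add (integrable_mul_comp (Ψ := fun t => t) f _ continuous_id')
      (integrable_mul_comp (Ψ := fun t => t) f _ continuous_id'),
    integral_sub (integrable_mul_comp (Ψ := fun t => t) f f continuous_id')
      (integrable_mul_comp f f (continuous_abs_rpow_sub_one_mul hp)),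
    integral_mul_lineDerivOp_right_eq_neg_left f (∂_{v} f) v,
    integral_mul_lineDerivOp_right_eq_neg_left f (∂_{u} f) u] at hpair
  simp only [← sq, mul_abs_rpow_sub_one_mul_self hp] at hpair
  linear_combination -hpair

theorem integral_lineDerivOp_sq_sub_integral_lineDerivOp_sq (hp : 0 < p) {ℓ : D →L[ℝ] ℝ}
    (hℓv : ℓ v = 1) (hℓu : ℓ u = 0)
    (hf : ∀ x, ∂_{v} (∂_{v} f) x + ∂_{u} (∂_{u} f) x = f x - |f x| ^ (p - 1) * f x) :
    (∫ x, ∂_{u} f x ^ 2 ∂μ - ∫ x, ∂_{v} f x ^ 2 ∂μ) / 2 =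
      (∫ x, |f x| ^ (p + 1) ∂μ) / (p + 1) - (∫ x, f x ^ 2 ∂μ) / 2 := by
  have hpair : ∫ x, ℓ x * ∂_{v} f x * (∂_{v} (∂_{v} f) x + ∂_{u} (∂_{u} f) x) ∂μ =
      ∫ x, ℓ x * ∂_{v} f x * (f x - |f x| ^ (p - 1) * f x) ∂μ := by
    simp only [hf]
  have hvv : ∫ x, ℓ x * ∂_{v} f x * ∂_{v} (∂_{v} f) x ∂μ =
      -(ℓ v / 2 * ∫ x, ∂_{v} f x ^ 2 ∂μ) := by
    rw [← integral_clm_mul_lineDerivOp_mul_self]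
    simp only [mul_right_comm]
  simp only [mul_add, mul_sub] at hpair
  rw [integral_add (integrable_clm_mul_mul_comp (Ψ := fun t => t) ℓ _ _ continuous_id')
      (integrable_clm_mul_mul_comp (Ψ := fun t => t) ℓ _ _ continuous_id'),
    integral_sub (integrable_clm_mul_mul_comp (Ψ := fun t => t) ℓ _ _ continuous_id')
      (integrable_clm_mul_mul_comp ℓ _ f (continuous_abs_rpow_sub_one_mul hp)),
    hvv, integral_clm_mul_lineDerivOp_mul_lineDerivOp_lineDerivOp ℓ hℓu,
    integral_clm_mul_lineDerivOp_mul_self, integral_clm_mul_lineDerivOp_mul_abs_rpow hp, hℓv]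
    at hpair
  linear_combination hpair

end Pokhozhaev

theorem pdx_eq_lineDerivOp (f : 𝓢(ℝ × ℝ, ℝ)) : pdx f = ∂_{((1 : ℝ), (0 : ℝ))} f := rfl

theorem pdy_eq_lineDerivOp (f : 𝓢(ℝ × ℝ, ℝ)) : pdy f = ∂_{((0 : ℝ), (1 : ℝ))} f := rfl

/-- first Pokhozhaev identity for Schwartz solutions of
ΔQ - Q + |Q|^{p-1} Q = 0 on ℝ². -/
theorem pokhozhaev_first (p : ℝ) (hp : 1 < p) (Q : ℝ × ℝ → ℝ)
    (hQ : IsSchwartz Q)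
    (heq : ∀ z, lap Q z - Q z + |Q z| ^ (p - 1) * Q z = 0) :
    (∫ z : ℝ × ℝ, ((pdx Q z) ^ 2 + (pdy Q z) ^ 2)) =
      (p - 1) / 2 * ∫ z : ℝ × ℝ, (Q z) ^ 2 := by
  obtain ⟨g, hg⟩ := hQ
  obtain rfl : ⇑g = Q := funext hg
  have hp₀ : 0 < p := by linarith
  have hxy : ∀ z, ∂_{((1 : ℝ), (0 : ℝ))} (∂_{((1 : ℝ), (0 : ℝ))} g) z +
      ∂_{((0 : ℝ), (1 : ℝ))} (∂_{((0 : ℝ), (1 : ℝ))} g) z = g z - |g z| ^ (p - 1) * g z :=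
    fun z => by
      have h := heq z
      simp only [lap, pdx_eq_lineDerivOp, pdy_eq_lineDerivOp] at h
      linarith
  have hgrad := integral_lineDerivOp_sq_add_integral_lineDerivOp_sq (μ := volume) hp₀ hxy
  have hx := integral_lineDerivOp_sq_sub_integral_lineDerivOp_sq (μ := volume) hp₀
    (ℓ := ContinuousLinearMap.fst ℝ ℝ ℝ) (by simp) (by simp) hxy
  have hy := integral_lineDerivOp_sq_sub_integral_lineDerivOp_sq (μ := volume) hp₀
    (ℓ := ContinuousLinearMap.snd ℝ ℝ ℝ) (by simp) (by simp)
    fun z => (add_comm _ _).trans (hxy z)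
  rw [pdx_eq_lineDerivOp, pdy_eq_lineDerivOp,
    integral_add ((SchwartzMap.memLp (∂_{((1 : ℝ), (0 : ℝ))} g) 2 volume).integrable_sq)
      ((SchwartzMap.memLp (∂_{((0 : ℝ), (1 : ℝ))} g) 2 volume).integrable_sq)]
  linear_combination (norm := skip) hgrad - (p + 1) / 2 * (hx + hy)
  field_simp
  ring
end

section
/- (Second Pokhozhaev identity.) Let p > 1 and let Q : ℝ² → ℝ be a Schwartz-class function solving ΔQ − Q + |Q|^{p−1} Q = 0 on ℝ², where Δ = ∂_x² + ∂_y². Then ∫_{ℝ²} |Q|^{p+1} dx dy = ((p+1)/2) ∫_{ℝ²} Q² dx dy. -/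
open MeasureTheory Real

section PokhozhaevAux

open Filter Topology Set SchwartzMap

/-! ### Fundamental theorem of calculus on the plane -/

lemma aux1d (v w : ℝ → ℝ) (hd : ∀ x, HasDerivAt v (w x) x)
    (hw : Integrable w) (hb : Tendsto v atBot (𝓝 0)) (ht : Tendsto v atTop (𝓝 0)) :
    ∫ x, w x = 0 := by
  have h1 := integral_Iic_of_hasDerivAt_of_tendsto' (a := (0:ℝ)) (f := v) (f' := w)
      (fun x _ => hd x) hw.integrableOn hb
  have h2 := integral_Ioi_of_hasDerivAt_of_tendsto' (a := (0:ℝ)) (f := v) (f' := w)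
      (fun x _ => hd x) hw.integrableOn ht
  have h3 := intervalIntegral.integral_Iic_add_Ioi (b := (0:ℝ)) (f := w)
      hw.integrableOn hw.integrableOn
  rw [← h3, h1, h2]; ring

lemma auxpdx (u w : ℝ × ℝ → ℝ)
    (hd : ∀ z : ℝ × ℝ, HasDerivAt (fun x => u (x, z.2)) (w z) z.1)
    (hw : Integrable w)
    (hb : ∀ y, Tendsto (fun x => u (x, y)) atBot (𝓝 0))
    (ht : ∀ y, Tendsto (fun x => u (x, y)) atTop (𝓝 0)) :
    ∫ z, w z = 0 := by
  rw [show (volume : Measure (ℝ × ℝ)) = (volume : Measure ℝ).prod volume from rfl] at hw ⊢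
  rw [integral_prod_symm w hw]
  rw [integral_congr_ae (g := fun _ => (0:ℝ))]
  · simp
  · filter_upwards [hw.prod_left_ae] with y hy
    exact aux1d (fun x => u (x, y)) (fun x => w (x, y)) (fun x => hd (x, y)) hy (hb y) (ht y)

lemma auxpdy (u w : ℝ × ℝ → ℝ)
    (hd : ∀ z : ℝ × ℝ, HasDerivAt (fun y => u (z.1, y)) (w z) z.2)
    (hw : Integrable w)
    (hb : ∀ x, Tendsto (fun y => u (x, y)) atBot (𝓝 0))
    (ht : ∀ x, Tendsto (fun y => u (x, y)) atTop (𝓝 0)) :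
    ∫ z, w z = 0 := by
  rw [show (volume : Measure (ℝ × ℝ)) = (volume : Measure ℝ).prod volume from rfl] at hw ⊢
  rw [integral_prod w hw]
  rw [integral_congr_ae (g := fun _ => (0:ℝ))]
  · simp
  · filter_upwards [hw.prod_right_ae] with x hx
    exact aux1d (fun y => u (x, y)) (fun y => w (x, y)) (fun y => hd (x, y)) hx (hb x) (ht x)

/-! ### Schwartz function facts -/

lemma schwartz_decay (g : SchwartzMap (ℝ × ℝ) ℝ) (k : ℕ) :
    ∃ C : ℝ, 0 ≤ C ∧ ∀ z : ℝ × ℝ, |g z| ≤ C / (1 + ‖z‖) ^ k := by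
  refine ⟨2 ^ k * (Finset.Iic (k, 0)).sup (fun m => SchwartzMap.seminorm ℝ m.1 m.2) g,
    by positivity, fun z => ?_⟩
  have h := one_add_le_sup_seminorm_apply (𝕜 := ℝ) (m := (k, 0)) (k := k) (n := 0)
    le_rfl le_rfl g z
  rw [norm_iteratedFDeriv_zero] at h
  rw [div_eq_inv_mul, le_inv_mul_iff₀ (by positivity)]
  simpa [Real.norm_eq_abs, mul_comm] using h

lemma schwartz_bounded (g : SchwartzMap (ℝ × ℝ) ℝ) : ∃ C : ℝ, 0 ≤ C ∧ ∀ z : ℝ × ℝ, |g z| ≤ C := by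
  obtain ⟨C, hC, h⟩ := schwartz_decay g 0
  exact ⟨C, hC, fun z => by simpa using h z⟩

lemma integrable_of_decay (f : ℝ × ℝ → ℝ) (hf : Continuous f) (C : ℝ)
    (h : ∀ z, |f z| ≤ C / (1 + ‖z‖) ^ 3) : Integrable f := by
  have hint : Integrable (fun z : ℝ × ℝ => C * (1 + ‖z‖) ^ (-(3:ℝ))) :=
    (integrable_one_add_norm (E := ℝ × ℝ) (r := 3) (by simp; norm_num)).const_mul C
  apply hint.mono' hf.aestronglyMeasurable
  filter_upwards with z
  have h1 : (0:ℝ) < 1 + ‖z‖ := by positivity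
  have e : (1 + ‖z‖) ^ (-(3:ℝ)) = ((1 + ‖z‖) ^ (3:ℕ))⁻¹ := by
    rw [← Real.rpow_natCast (1 + ‖z‖) 3, ← Real.rpow_neg h1.le]; norm_num
  rw [Real.norm_eq_abs, e]
  calc |f z| ≤ C / (1 + ‖z‖) ^ 3 := h z
    _ = C * ((1 + ‖z‖) ^ (3:ℕ))⁻¹ := by rw [div_eq_mul_inv]

lemma sliceX (f : ℝ × ℝ → ℝ) (hf : Differentiable ℝ f) (x y : ℝ) :
    HasDerivAt (fun t => f (t, y)) (pdx f (x, y)) x :=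
  (hf (x, y)).hasFDerivAt.comp_hasDerivAt x ((hasDerivAt_id x).prodMk (hasDerivAt_const x y))

lemma sliceY (f : ℝ × ℝ → ℝ) (hf : Differentiable ℝ f) (x y : ℝ) :
    HasDerivAt (fun t => f (x, t)) (pdy f (x, y)) y :=
  (hf (x, y)).hasFDerivAt.comp_hasDerivAt y ((hasDerivAt_const y x).prodMk (hasDerivAt_id y))

lemma schwartz_diff (g : SchwartzMap (ℝ × ℝ) ℝ) : Differentiable ℝ ⇑g :=
  (g.smooth ⊤).differentiable (by simp)

noncomputable def SchwartzMap.pderivCLM (𝕜 : Type) (m : ℝ × ℝ) :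
    SchwartzMap (ℝ × ℝ) ℝ →L[ℝ] SchwartzMap (ℝ × ℝ) ℝ :=
  LineDeriv.lineDerivOpCLM ℝ (SchwartzMap (ℝ × ℝ) ℝ) m

lemma SchwartzMap.pderivCLM_apply (𝕜 : Type) (m : ℝ × ℝ) (f : SchwartzMap (ℝ × ℝ) ℝ)
    (x : ℝ × ℝ) : pderivCLM 𝕜 m f x = fderiv ℝ f x m :=
  SchwartzMap.lineDerivOp_apply_eq_fderiv m f x

lemma pdx_coe (g : SchwartzMap (ℝ × ℝ) ℝ) :
    pdx ⇑g = ⇑(pderivCLM ℝ (((1:ℝ), (0:ℝ)) : ℝ × ℝ) g) :=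
  funext fun w => (pderivCLM_apply ℝ _ g w).symm

lemma pdy_coe (g : SchwartzMap (ℝ × ℝ) ℝ) :
    pdy ⇑g = ⇑(pderivCLM ℝ (((0:ℝ), (1:ℝ)) : ℝ × ℝ) g) :=
  funext fun w => (pderivCLM_apply ℝ _ g w).symm

lemma pdx_diff (g : SchwartzMap (ℝ × ℝ) ℝ) : Differentiable ℝ (pdx ⇑g) := by
  rw [pdx_coe]; exact schwartz_diff _

lemma pdy_diff (g : SchwartzMap (ℝ × ℝ) ℝ) : Differentiable ℝ (pdy ⇑g) := by
  rw [pdy_coe]; exact schwartz_diff _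

lemma pdxx_coe (g : SchwartzMap (ℝ × ℝ) ℝ) :
    pdx (pdx ⇑g) = ⇑(pderivCLM ℝ (((1:ℝ), (0:ℝ)) : ℝ × ℝ)
      (pderivCLM ℝ (((1:ℝ), (0:ℝ)) : ℝ × ℝ) g)) := by
  rw [pdx_coe g]; exact pdx_coe _

lemma pdxy_coe (g : SchwartzMap (ℝ × ℝ) ℝ) :
    pdx (pdy ⇑g) = ⇑(pderivCLM ℝ (((1:ℝ), (0:ℝ)) : ℝ × ℝ)
      (pderivCLM ℝ (((0:ℝ), (1:ℝ)) : ℝ × ℝ) g)) := by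
  rw [pdy_coe g]; exact pdx_coe _

lemma pdyx_coe (g : SchwartzMap (ℝ × ℝ) ℝ) :
    pdy (pdx ⇑g) = ⇑(pderivCLM ℝ (((0:ℝ), (1:ℝ)) : ℝ × ℝ)
      (pderivCLM ℝ (((1:ℝ), (0:ℝ)) : ℝ × ℝ) g)) := by
  rw [pdx_coe g]; exact pdy_coe _

lemma pdyy_coe (g : SchwartzMap (ℝ × ℝ) ℝ) :
    pdy (pdy ⇑g) = ⇑(pderivCLM ℝ (((0:ℝ), (1:ℝ)) : ℝ × ℝ)
      (pderivCLM ℝ (((0:ℝ), (1:ℝ)) : ℝ × ℝ) g)) := by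
  rw [pdy_coe g]; exact pdy_coe _

lemma pdx_pdy_symm (g : SchwartzMap (ℝ × ℝ) ℝ) (z : ℝ × ℝ) :
    pdx (pdy ⇑g) z = pdy (pdx ⇑g) z := by
  have hsm : ContDiff ℝ ((⊤:ℕ∞) : WithTop ℕ∞) ⇑g := g.smooth ⊤
  have hdiff : Differentiable ℝ ⇑g := hsm.differentiable (by simp)
  have hF : Differentiable ℝ (fderiv ℝ ⇑g) :=
    ((contDiff_infty_iff_fderiv.mp hsm).2).differentiable (by simp)
  have hsym := second_derivative_symmetric (f := ⇑g) (f' := fderiv ℝ ⇑g)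
    (f'' := fderiv ℝ (fderiv ℝ ⇑g) z) (fun y => (hdiff y).hasFDerivAt) (hF z).hasFDerivAt
  have e : ∀ v w : ℝ × ℝ, fderiv ℝ (fun w' => fderiv ℝ ⇑g w' v) z w
      = fderiv ℝ (fderiv ℝ ⇑g) z w v := by
    intro v w
    have hc : HasFDerivAt (fun w' => (ContinuousLinearMap.apply ℝ ℝ v) (fderiv ℝ ⇑g w'))
        ((ContinuousLinearMap.apply ℝ ℝ v).comp (fderiv ℝ (fderiv ℝ ⇑g) z)) z :=
      (ContinuousLinearMap.apply ℝ ℝ v).hasFDerivAt.comp z (hF z).hasFDerivAt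
    have h2 := hc.fderiv
    simp only [ContinuousLinearMap.apply_apply] at h2
    rw [h2]; rfl
  unfold pdx pdy
  rw [e, e, hsym]

lemma hasDerivAt_abs_rpow' {p : ℝ} (hp : 1 < p) (t : ℝ) :
    HasDerivAt (fun s : ℝ => |s| ^ (p + 1)) ((p + 1) * |t| ^ (p - 1) * t) t := by
  have := hasDerivAt_abs_rpow t (p := p + 1) (by linarith)
  simpa [show p + 1 - 2 = p - 1 by ring] using this

lemma rpow_split {p : ℝ} (hp : 1 < p) (a : ℝ) :
    |a| ^ (p + 1) = |a| ^ (p - 1) * a * a := by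
  have h2 : |a| ^ (2:ℝ) = a * a := by
    rw [show (2:ℝ) = ((2:ℕ):ℝ) by norm_num, Real.rpow_natCast, sq_abs, sq]
  rw [show p + 1 = (p - 1) + 2 by ring, Real.rpow_add' (abs_nonneg a) (by linarith), h2]
  ring

/-! ### The Pokhozhaev multiplier fields -/

noncomputable def Ufun (p : ℝ) (g : SchwartzMap (ℝ × ℝ) ℝ) (z : ℝ × ℝ) : ℝ :=
  z.1 * (pdx ⇑g z * pdx ⇑g z) / 2 + -(z.1 * (pdy ⇑g z * pdy ⇑g z)) / 2
    + z.2 * (pdx ⇑g z * pdy ⇑g z) + -(z.1 * (g z * g z)) / 2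
    + z.1 * (|g z| ^ (p - 1) * g z * g z) / (p + 1)

noncomputable def Vfun (p : ℝ) (g : SchwartzMap (ℝ × ℝ) ℝ) (z : ℝ × ℝ) : ℝ :=
  z.1 * (pdx ⇑g z * pdy ⇑g z) + z.2 * (pdy ⇑g z * pdy ⇑g z) / 2
    + -(z.2 * (pdx ⇑g z * pdx ⇑g z)) / 2 + -(z.2 * (g z * g z)) / 2
    + z.2 * (|g z| ^ (p - 1) * g z * g z) / (p + 1)

noncomputable def W1fun (p : ℝ) (g : SchwartzMap (ℝ × ℝ) ℝ) (z : ℝ × ℝ) : ℝ :=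
  pdx ⇑g z * pdx ⇑g z / 2 + -(pdy ⇑g z * pdy ⇑g z) / 2
    + z.1 * (pdx ⇑g z * pdx (pdx ⇑g) z) + -(z.1 * (pdy ⇑g z * pdx (pdy ⇑g) z))
    + z.2 * (pdx (pdx ⇑g) z * pdy ⇑g z) + z.2 * (pdx ⇑g z * pdx (pdy ⇑g) z)
    + -(g z * g z) / 2 + -(z.1 * (g z * pdx ⇑g z))
    + |g z| ^ (p - 1) * g z * g z / (p + 1)
    + z.1 * (|g z| ^ (p - 1) * g z * pdx ⇑g z)

noncomputable def W2fun (p : ℝ) (g : SchwartzMap (ℝ × ℝ) ℝ) (z : ℝ × ℝ) : ℝ :=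
  z.1 * (pdy (pdx ⇑g) z * pdy ⇑g z) + z.1 * (pdx ⇑g z * pdy (pdy ⇑g) z)
    + pdy ⇑g z * pdy ⇑g z / 2 + -(pdx ⇑g z * pdx ⇑g z) / 2
    + z.2 * (pdy ⇑g z * pdy (pdy ⇑g) z) + -(z.2 * (pdx ⇑g z * pdy (pdx ⇑g) z))
    + -(g z * g z) / 2 + -(z.2 * (g z * pdy ⇑g z))
    + |g z| ^ (p - 1) * g z * g z / (p + 1)
    + z.2 * (|g z| ^ (p - 1) * g z * pdy ⇑g z)

lemma sum_W (p : ℝ) (hp : 1 < p) (g : SchwartzMap (ℝ × ℝ) ℝ) (z : ℝ × ℝ)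
    (heq : lap ⇑g z - g z + |g z| ^ (p - 1) * g z = 0) :
    W1fun p g z + W2fun p g z
      = -(g z * g z) + 2 / (p + 1) * (|g z| ^ (p - 1) * g z * g z) := by
  have hsymm := pdx_pdy_symm g z
  unfold lap at heq
  unfold W1fun W2fun
  rw [hsymm]
  linear_combination (z.1 * pdx ⇑g z + z.2 * pdy ⇑g z) * heq

lemma hasDerivAt_U (p : ℝ) (hp : 1 < p) (g : SchwartzMap (ℝ × ℝ) ℝ) (z : ℝ × ℝ) :
    HasDerivAt (fun t => Ufun p g (t, z.2)) (W1fun p g z) z.1 := by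
  obtain ⟨x, y⟩ := z
  have hDg := sliceX ⇑g (schwartz_diff g) x y
  have hD1 := sliceX (pdx ⇑g) (pdx_diff g) x y
  have hD2 := sliceX (pdy ⇑g) (pdy_diff g) x y
  have hN : HasDerivAt (fun t => |g (t, y)| ^ (p + 1))
      ((p + 1) * |g (x, y)| ^ (p - 1) * g (x, y) * pdx ⇑g (x, y)) x := by
    have := (hasDerivAt_abs_rpow' hp (g (x, y))).comp x hDg
    exact this
  have hfun : (fun t => Ufun p g (t, y)) = fun t =>
      t * (pdx ⇑g (t, y) * pdx ⇑g (t, y)) / 2 + -(t * (pdy ⇑g (t, y) * pdy ⇑g (t, y))) / 2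
        + y * (pdx ⇑g (t, y) * pdy ⇑g (t, y)) + -(t * (g (t, y) * g (t, y))) / 2
        + t * |g (t, y)| ^ (p + 1) / (p + 1) := by
    funext t
    unfold Ufun
    rw [rpow_split hp (g (t, y))]
  rw [show (x, y).1 = x from rfl, show (x, y).2 = y from rfl, hfun]
  have H := (((((hasDerivAt_id' (x := x)).mul (hD1.mul hD1)).div_const 2).add
      ((((hasDerivAt_id' (x := x)).mul (hD2.mul hD2)).neg).div_const 2)).add
      ((hD1.mul hD2).const_mul y)).add
      ((((hasDerivAt_id' (x := x)).mul (hDg.mul hDg)).neg).div_const 2) |>.add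
      (((hasDerivAt_id' (x := x)).mul hN).div_const (p + 1))
  refine H.congr_deriv (Eq.symm ?_)
  unfold W1fun
  rw [rpow_split hp (g (x, y))]
  have hp1 : p + 1 ≠ 0 := by linarith
  field_simp
  simp only [Pi.mul_apply]
  ring

lemma hasDerivAt_V (p : ℝ) (hp : 1 < p) (g : SchwartzMap (ℝ × ℝ) ℝ) (z : ℝ × ℝ) :
    HasDerivAt (fun t => Vfun p g (z.1, t)) (W2fun p g z) z.2 := by
  obtain ⟨x, y⟩ := z
  have hDg := sliceY ⇑g (schwartz_diff g) x y
  have hD1 := sliceY (pdx ⇑g) (pdx_diff g) x y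
  have hD2 := sliceY (pdy ⇑g) (pdy_diff g) x y
  have hN : HasDerivAt (fun t => |g (x, t)| ^ (p + 1))
      ((p + 1) * |g (x, y)| ^ (p - 1) * g (x, y) * pdy ⇑g (x, y)) y := by
    have := (hasDerivAt_abs_rpow' hp (g (x, y))).comp y hDg
    exact this
  have hfun : (fun t => Vfun p g (x, t)) = fun t =>
      x * (pdx ⇑g (x, t) * pdy ⇑g (x, t)) + t * (pdy ⇑g (x, t) * pdy ⇑g (x, t)) / 2
        + -(t * (pdx ⇑g (x, t) * pdx ⇑g (x, t))) / 2 + -(t * (g (x, t) * g (x, t))) / 2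
        + t * |g (x, t)| ^ (p + 1) / (p + 1) := by
    funext t
    unfold Vfun
    rw [rpow_split hp (g (x, t))]
  rw [show ((x, y) : ℝ × ℝ).1 = x from rfl, show ((x, y) : ℝ × ℝ).2 = y from rfl, hfun]
  have H := ((((((hD1.mul hD2).const_mul x)).add
      (((hasDerivAt_id' (x := y)).mul (hD2.mul hD2)).div_const 2)).add
      ((((hasDerivAt_id' (x := y)).mul (hD1.mul hD1)).neg).div_const 2)).add
      ((((hasDerivAt_id' (x := y)).mul (hDg.mul hDg)).neg).div_const 2)) |>.add
      (((hasDerivAt_id' (x := y)).mul hN).div_const (p + 1))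
  refine H.congr_deriv (Eq.symm ?_)
  unfold W2fun
  dsimp only
  rw [rpow_split hp (g (x, y))]
  have hp1 : p + 1 ≠ 0 := by linarith
  field_simp
  simp only [Pi.mul_apply]
  ring

/-! ### Elementary bounds -/

lemma pabs_add {a b A B : ℝ} (ha : |a| ≤ A) (hb : |b| ≤ B) : |a + b| ≤ A + B :=
  (abs_add_le a b).trans (add_le_add ha hb)

lemma pabs_neg {a A : ℝ} (h : |a| ≤ A) : |-a| ≤ A := by rwa [abs_neg]

lemma pabs_divc {a A c : ℝ} (hc : 0 < c) (h : |a| ≤ A) : |a / c| ≤ A / c := by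
  rw [abs_div, abs_of_pos hc]
  exact div_le_div_of_nonneg_right h hc.le

lemma nonneg_of_bnd {q C n : ℝ} (hn : 0 ≤ n) (hq : |q| ≤ C / (1 + n) ^ 2) : 0 ≤ C := by
  have h1 : (0:ℝ) < 1 + n := by linarith
  have h := (abs_nonneg q).trans hq
  by_contra hc
  push_neg at hc
  have : C / (1 + n) ^ 2 < 0 := div_neg_of_neg_of_pos hc (by positivity)
  linarith

lemma bndA {x q r C D n : ℝ} (hn : 0 ≤ n) (hx : |x| ≤ 1 + n)
    (hq : |q| ≤ C / (1 + n) ^ 2) (hr : |r| ≤ D / (1 + n) ^ 2) :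
    |x * (q * r)| ≤ C * D / (1 + n) ^ 3 := by
  have h1 : (0:ℝ) < 1 + n := by linarith
  have hC := nonneg_of_bnd hn hq
  have hD := nonneg_of_bnd hn hr
  calc |x * (q * r)| = |x| * (|q| * |r|) := by rw [abs_mul, abs_mul]
    _ ≤ (1 + n) * (C / (1 + n) ^ 2 * (D / (1 + n) ^ 2)) :=
        mul_le_mul hx (mul_le_mul hq hr (abs_nonneg r) (by positivity))
          (by positivity) h1.le
    _ = C * D / (1 + n) ^ 3 := by field_simp

lemma bndB {q r C D n : ℝ} (hn : 0 ≤ n)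
    (hq : |q| ≤ C / (1 + n) ^ 2) (hr : |r| ≤ D / (1 + n) ^ 2) :
    |q * r| ≤ C * D / (1 + n) ^ 3 := by
  have h1 : (0:ℝ) < 1 + n := by linarith
  have hC := nonneg_of_bnd hn hq
  have hD := nonneg_of_bnd hn hr
  calc |q * r| = |q| * |r| := abs_mul q r
    _ ≤ C / (1 + n) ^ 2 * (D / (1 + n) ^ 2) :=
        mul_le_mul hq hr (abs_nonneg r) (by positivity)
    _ = C * D / (1 + n) ^ 4 := by rw [div_mul_div_comm, ← pow_add]
    _ ≤ C * D / (1 + n) ^ 3 := by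
        apply div_le_div_of_nonneg_left (by positivity) (by positivity)
        nlinarith [sq_nonneg n]

lemma bnd_weaken {C n : ℝ} (hn : 0 ≤ n) (hC : 0 ≤ C) :
    C / (1 + n) ^ 3 ≤ C / (1 + n) := by
  rcases eq_or_lt_of_le hC with rfl | hC'
  · simp
  apply div_le_div_of_nonneg_left hC (by positivity)
  nlinarith [sq_nonneg n]

lemma tendsto_of_decay (v : ℝ → ℝ) (C : ℝ) (h : ∀ x, |v x| ≤ C / (1 + |x|)) :
    Filter.Tendsto v Filter.atBot (nhds 0) ∧ Filter.Tendsto v Filter.atTop (nhds 0) := by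
  have hbT : Filter.Tendsto (fun x : ℝ => C / (1 + |x|)) Filter.atTop (nhds 0) :=
    Filter.Tendsto.div_atTop tendsto_const_nhds
      (tendsto_atTop_add_const_left _ _ tendsto_abs_atTop_atTop)
  have hbB : Filter.Tendsto (fun x : ℝ => C / (1 + |x|)) Filter.atBot (nhds 0) :=
    Filter.Tendsto.div_atTop tendsto_const_nhds
      (tendsto_atTop_add_const_left _ _ tendsto_abs_atBot_atTop)
  exact ⟨squeeze_zero_norm h hbB, squeeze_zero_norm h hbT⟩

end PokhozhaevAux

set_option maxHeartbeats 1000000 in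
/-- second Pokhozhaev identity for Schwartz solutions of
ΔQ - Q + |Q|^{p-1} Q = 0 on ℝ². -/
theorem pokhozhaev_second (p : ℝ) (hp : 1 < p) (Q : ℝ × ℝ → ℝ)
    (hQ : IsSchwartz Q)
    (heq : ∀ z, lap Q z - Q z + |Q z| ^ (p - 1) * Q z = 0) :
    (∫ z : ℝ × ℝ, |Q z| ^ (p + 1)) =
      (p + 1) / 2 * ∫ z : ℝ × ℝ, (Q z) ^ 2 := by
  classical
  obtain ⟨g, hgQ⟩ := hQ
  have hQg : Q = ⇑g := funext fun z => (hgQ z).symm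
  subst hQg
  have hp1 : (0:ℝ) < p + 1 := by linarith
  -- decay bounds with exponent 2 for g and all its first and second partials
  obtain ⟨C0, hC0, hb0⟩ := schwartz_decay g 2
  obtain ⟨C1, hC1, hb1⟩ := schwartz_decay (SchwartzMap.pderivCLM ℝ (((1:ℝ),(0:ℝ)) : ℝ × ℝ) g) 2
  obtain ⟨C2, hC2, hb2⟩ := schwartz_decay (SchwartzMap.pderivCLM ℝ (((0:ℝ),(1:ℝ)) : ℝ × ℝ) g) 2
  obtain ⟨C11, hC11, hb11⟩ := schwartz_decay (SchwartzMap.pderivCLM ℝ (((1:ℝ),(0:ℝ)) : ℝ × ℝ)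
    (SchwartzMap.pderivCLM ℝ (((1:ℝ),(0:ℝ)) : ℝ × ℝ) g)) 2
  obtain ⟨C12, hC12, hb12⟩ := schwartz_decay (SchwartzMap.pderivCLM ℝ (((1:ℝ),(0:ℝ)) : ℝ × ℝ)
    (SchwartzMap.pderivCLM ℝ (((0:ℝ),(1:ℝ)) : ℝ × ℝ) g)) 2
  obtain ⟨C21, hC21, hb21⟩ := schwartz_decay (SchwartzMap.pderivCLM ℝ (((0:ℝ),(1:ℝ)) : ℝ × ℝ)
    (SchwartzMap.pderivCLM ℝ (((1:ℝ),(0:ℝ)) : ℝ × ℝ) g)) 2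
  obtain ⟨C22, hC22, hb22⟩ := schwartz_decay (SchwartzMap.pderivCLM ℝ (((0:ℝ),(1:ℝ)) : ℝ × ℝ)
    (SchwartzMap.pderivCLM ℝ (((0:ℝ),(1:ℝ)) : ℝ × ℝ) g)) 2
  rw [← pdx_coe] at hb1
  rw [← pdy_coe] at hb2
  rw [← pdxx_coe] at hb11
  rw [← pdxy_coe] at hb12
  rw [← pdyx_coe] at hb21
  rw [← pdyy_coe] at hb22
  obtain ⟨M, hM, hMb⟩ := schwartz_bounded g
  set K : ℝ := M ^ (p - 1) with hKdef
  have hK : 0 ≤ K := Real.rpow_nonneg hM _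
  -- bound for the nonlinearity |g|^{p-1} g
  have hNb : ∀ z : ℝ × ℝ, |(|g z| ^ (p - 1) * g z)| ≤ K * C0 / (1 + ‖z‖) ^ 2 := by
    intro z
    rw [abs_mul, abs_of_nonneg (Real.rpow_nonneg (abs_nonneg _) _)]
    calc |g z| ^ (p - 1) * |g z| ≤ K * (C0 / (1 + ‖z‖) ^ 2) :=
          mul_le_mul (Real.rpow_le_rpow (abs_nonneg _) (hMb z) (by linarith))
            (hb0 z) (abs_nonneg _) hK
      _ = K * C0 / (1 + ‖z‖) ^ 2 := (mul_div_assoc _ _ _).symm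
  -- coordinate bounds
  have hz1 : ∀ z : ℝ × ℝ, |z.1| ≤ 1 + ‖z‖ := by
    intro z
    have h := norm_fst_le z
    rw [Real.norm_eq_abs] at h
    linarith [norm_nonneg z]
  have hz2 : ∀ z : ℝ × ℝ, |z.2| ≤ 1 + ‖z‖ := by
    intro z
    have h := norm_snd_le z
    rw [Real.norm_eq_abs] at h
    linarith [norm_nonneg z]
  -- constants
  set SU : ℝ := C1*C1/2 + C2*C2/2 + C1*C2 + C0*C0/2 + K*C0*C0/(p+1) with hSUdef
  set SV : ℝ := C1*C2 + C2*C2/2 + C1*C1/2 + C0*C0/2 + K*C0*C0/(p+1) with hSVdef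
  set SW1 : ℝ := C1*C1/2 + C2*C2/2 + C1*C11 + C2*C12 + C11*C2 + C1*C12
    + C0*C0/2 + C0*C1 + K*C0*C0/(p+1) + K*C0*C1 with hSW1def
  set SW2 : ℝ := C21*C2 + C1*C22 + C2*C2/2 + C1*C1/2 + C2*C22 + C1*C21
    + C0*C0/2 + C0*C2 + K*C0*C0/(p+1) + K*C0*C2 with hSW2def
  have hSU : 0 ≤ SU := by
    have h5 : 0 ≤ K*C0*C0/(p+1) := div_nonneg (by positivity) hp1.le
    have h4 : 0 ≤ C1*C1/2 + C2*C2/2 + C1*C2 + C0*C0/2 := by positivity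
    rw [hSUdef]; linarith
  have hSV : 0 ≤ SV := by
    have h5 : 0 ≤ K*C0*C0/(p+1) := div_nonneg (by positivity) hp1.le
    have h4 : 0 ≤ C1*C2 + C2*C2/2 + C1*C1/2 + C0*C0/2 := by positivity
    rw [hSVdef]; linarith
  -- pointwise bounds
  have hUb : ∀ z : ℝ × ℝ, |Ufun p g z| ≤ SU / (1 + ‖z‖) ^ 3 := by
    intro z
    have hn : (0:ℝ) ≤ ‖z‖ := norm_nonneg z
    have h1 := pabs_divc (two_pos : (0:ℝ) < 2) (bndA hn (hz1 z) (hb1 z) (hb1 z))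
    have h2 := pabs_divc (two_pos : (0:ℝ) < 2) (pabs_neg (bndA hn (hz1 z) (hb2 z) (hb2 z)))
    have h3 := bndA hn (hz2 z) (hb1 z) (hb2 z)
    have h4 := pabs_divc (two_pos : (0:ℝ) < 2) (pabs_neg (bndA hn (hz1 z) (hb0 z) (hb0 z)))
    have h5 := pabs_divc hp1 (bndA hn (hz1 z) (hNb z) (hb0 z))
    have h := pabs_add (pabs_add (pabs_add (pabs_add h1 h2) h3) h4) h5
    unfold Ufun
    refine h.trans (le_of_eq ?_)
    rw [hSUdef]; ring
  have hVb : ∀ z : ℝ × ℝ, |Vfun p g z| ≤ SV / (1 + ‖z‖) ^ 3 := by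
    intro z
    have hn : (0:ℝ) ≤ ‖z‖ := norm_nonneg z
    have h1 := bndA hn (hz1 z) (hb1 z) (hb2 z)
    have h2 := pabs_divc (two_pos : (0:ℝ) < 2) (bndA hn (hz2 z) (hb2 z) (hb2 z))
    have h3 := pabs_divc (two_pos : (0:ℝ) < 2) (pabs_neg (bndA hn (hz2 z) (hb1 z) (hb1 z)))
    have h4 := pabs_divc (two_pos : (0:ℝ) < 2) (pabs_neg (bndA hn (hz2 z) (hb0 z) (hb0 z)))
    have h5 := pabs_divc hp1 (bndA hn (hz2 z) (hNb z) (hb0 z))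
    have h := pabs_add (pabs_add (pabs_add (pabs_add h1 h2) h3) h4) h5
    unfold Vfun
    refine h.trans (le_of_eq ?_)
    rw [hSVdef]; ring
  have hW1b : ∀ z : ℝ × ℝ, |W1fun p g z| ≤ SW1 / (1 + ‖z‖) ^ 3 := by
    intro z
    have hn : (0:ℝ) ≤ ‖z‖ := norm_nonneg z
    have h1 := pabs_divc (two_pos : (0:ℝ) < 2) (bndB hn (hb1 z) (hb1 z))
    have h2 := pabs_divc (two_pos : (0:ℝ) < 2) (pabs_neg (bndB hn (hb2 z) (hb2 z)))
    have h3 := bndA hn (hz1 z) (hb1 z) (hb11 z)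
    have h4 := pabs_neg (bndA hn (hz1 z) (hb2 z) (hb12 z))
    have h5 := bndA hn (hz2 z) (hb11 z) (hb2 z)
    have h6 := bndA hn (hz2 z) (hb1 z) (hb12 z)
    have h7 := pabs_divc (two_pos : (0:ℝ) < 2) (pabs_neg (bndB hn (hb0 z) (hb0 z)))
    have h8 := pabs_neg (bndA hn (hz1 z) (hb0 z) (hb1 z))
    have h9 := pabs_divc hp1 (bndB hn (hNb z) (hb0 z))
    have h10 := bndA hn (hz1 z) (hNb z) (hb1 z)
    have h := pabs_add (pabs_add (pabs_add (pabs_add (pabs_add (pabs_add (pabs_add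
      (pabs_add (pabs_add h1 h2) h3) h4) h5) h6) h7) h8) h9) h10
    unfold W1fun
    refine h.trans (le_of_eq ?_)
    rw [hSW1def]; ring
  have hW2b : ∀ z : ℝ × ℝ, |W2fun p g z| ≤ SW2 / (1 + ‖z‖) ^ 3 := by
    intro z
    have hn : (0:ℝ) ≤ ‖z‖ := norm_nonneg z
    have h1 := bndA hn (hz1 z) (hb21 z) (hb2 z)
    have h2 := bndA hn (hz1 z) (hb1 z) (hb22 z)
    have h3 := pabs_divc (two_pos : (0:ℝ) < 2) (bndB hn (hb2 z) (hb2 z))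
    have h4 := pabs_divc (two_pos : (0:ℝ) < 2) (pabs_neg (bndB hn (hb1 z) (hb1 z)))
    have h5 := bndA hn (hz2 z) (hb2 z) (hb22 z)
    have h6 := pabs_neg (bndA hn (hz2 z) (hb1 z) (hb21 z))
    have h7 := pabs_divc (two_pos : (0:ℝ) < 2) (pabs_neg (bndB hn (hb0 z) (hb0 z)))
    have h8 := pabs_neg (bndA hn (hz2 z) (hb0 z) (hb2 z))
    have h9 := pabs_divc hp1 (bndB hn (hNb z) (hb0 z))
    have h10 := bndA hn (hz2 z) (hNb z) (hb2 z)
    have h := pabs_add (pabs_add (pabs_add (pabs_add (pabs_add (pabs_add (pabs_add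
      (pabs_add (pabs_add h1 h2) h3) h4) h5) h6) h7) h8) h9) h10
    unfold W2fun
    refine h.trans (le_of_eq ?_)
    rw [hSW2def]; ring
  -- continuity facts
  have hcontg : Continuous ⇑g := g.continuous
  have hcont1 : Continuous (pdx ⇑g) := by rw [pdx_coe]; exact SchwartzMap.continuous _
  have hcont2 : Continuous (pdy ⇑g) := by rw [pdy_coe]; exact SchwartzMap.continuous _
  have hcont11 : Continuous (pdx (pdx ⇑g)) := by rw [pdxx_coe]; exact SchwartzMap.continuous _
  have hcont12 : Continuous (pdx (pdy ⇑g)) := by rw [pdxy_coe]; exact SchwartzMap.continuous _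
  have hcont21 : Continuous (pdy (pdx ⇑g)) := by rw [pdyx_coe]; exact SchwartzMap.continuous _
  have hcont22 : Continuous (pdy (pdy ⇑g)) := by rw [pdyy_coe]; exact SchwartzMap.continuous _
  have hcontA : Continuous (fun z : ℝ × ℝ => |g z| ^ (p - 1)) :=
    (continuous_abs.comp hcontg).rpow_const (fun z => Or.inr (by linarith))
  have hcontN : Continuous (fun z : ℝ × ℝ => |g z| ^ (p - 1) * g z) := hcontA.mul hcontg
  have hcontW1 : Continuous (W1fun p g) := by
    unfold W1fun
    exact (((((((((((hcont1.mul hcont1).div_const 2).add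
      (((hcont2.mul hcont2).neg).div_const 2)).add
      (continuous_fst.mul (hcont1.mul hcont11))).add
      ((continuous_fst.mul (hcont2.mul hcont12)).neg)).add
      (continuous_snd.mul (hcont11.mul hcont2))).add
      (continuous_snd.mul (hcont1.mul hcont12))).add
      (((hcontg.mul hcontg).neg).div_const 2)).add
      ((continuous_fst.mul (hcontg.mul hcont1)).neg)).add
      (((hcontN.mul hcontg)).div_const (p+1))).add
      (continuous_fst.mul (hcontN.mul hcont1)))
  have hcontW2 : Continuous (W2fun p g) := by
    unfold W2fun
    exact ((((((((((continuous_fst.mul (hcont21.mul hcont2)).add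
      (continuous_fst.mul (hcont1.mul hcont22))).add
      ((hcont2.mul hcont2).div_const 2)).add
      (((hcont1.mul hcont1).neg).div_const 2)).add
      (continuous_snd.mul (hcont2.mul hcont22))).add
      ((continuous_snd.mul (hcont1.mul hcont21)).neg)).add
      (((hcontg.mul hcontg).neg).div_const 2)).add
      ((continuous_snd.mul (hcontg.mul hcont2)).neg)).add
      (((hcontN.mul hcontg)).div_const (p+1))).add
      (continuous_snd.mul (hcontN.mul hcont2)))
  -- integrability
  have hW1int : Integrable (W1fun p g) := integrable_of_decay _ hcontW1 SW1 hW1b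
  have hW2int : Integrable (W2fun p g) := integrable_of_decay _ hcontW2 SW2 hW2b
  have hg2b : ∀ z : ℝ × ℝ, |g z * g z| ≤ C0 * C0 / (1 + ‖z‖) ^ 3 := fun z =>
    bndB (norm_nonneg z) (hb0 z) (hb0 z)
  have hg2int : Integrable (fun z : ℝ × ℝ => g z * g z) :=
    integrable_of_decay _ (hcontg.mul hcontg) (C0 * C0) hg2b
  have hRb : ∀ z : ℝ × ℝ, |(|g z| ^ (p + 1))| ≤ K * C0 * C0 / (1 + ‖z‖) ^ 3 := by
    intro z
    rw [rpow_split hp (g z)]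
    have := bndB (norm_nonneg z) (hNb z) (hb0 z)
    calc |(|g z| ^ (p - 1) * g z * g z)| = |(|g z| ^ (p - 1) * g z) * g z| := by ring_nf
      _ ≤ K * C0 * C0 / (1 + ‖z‖) ^ 3 := this
  have hcontR : Continuous (fun z : ℝ × ℝ => |g z| ^ (p + 1)) :=
    (continuous_abs.comp hcontg).rpow_const (fun z => Or.inr (by linarith))
  have hRint : Integrable (fun z : ℝ × ℝ => |g z| ^ (p + 1)) :=
    integrable_of_decay _ hcontR (K * C0 * C0) hRb
  -- vanishing integrals of the divergence terms
  have hUslice : ∀ y : ℝ,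
      Filter.Tendsto (fun x => Ufun p g (x, y)) Filter.atBot (nhds 0) ∧
      Filter.Tendsto (fun x => Ufun p g (x, y)) Filter.atTop (nhds 0) := by
    intro y
    apply tendsto_of_decay _ SU
    intro x
    refine (hUb (x, y)).trans ?_
    refine le_trans (bnd_weaken (norm_nonneg _) hSU) ?_
    apply div_le_div_of_nonneg_left hSU (by positivity)
    have h := norm_fst_le ((x, y) : ℝ × ℝ)
    rw [Real.norm_eq_abs] at h
    simpa using h
  have hVslice : ∀ x : ℝ,
      Filter.Tendsto (fun y => Vfun p g (x, y)) Filter.atBot (nhds 0) ∧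
      Filter.Tendsto (fun y => Vfun p g (x, y)) Filter.atTop (nhds 0) := by
    intro x
    apply tendsto_of_decay _ SV
    intro y
    refine (hVb (x, y)).trans ?_
    refine le_trans (bnd_weaken (norm_nonneg _) hSV) ?_
    apply div_le_div_of_nonneg_left hSV (by positivity)
    have h := norm_snd_le ((x, y) : ℝ × ℝ)
    rw [Real.norm_eq_abs] at h
    simpa using h
  have hIW1 : ∫ z : ℝ × ℝ, W1fun p g z = 0 :=
    auxpdx (Ufun p g) (W1fun p g) (hasDerivAt_U p hp g) hW1int
      (fun y => (hUslice y).1) (fun y => (hUslice y).2)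
  have hIW2 : ∫ z : ℝ × ℝ, W2fun p g z = 0 :=
    auxpdy (Vfun p g) (W2fun p g) (hasDerivAt_V p hp g) hW2int
      (fun x => (hVslice x).1) (fun x => (hVslice x).2)
  -- put everything together
  have hsum0 : ∫ z : ℝ × ℝ, (W1fun p g z + W2fun p g z) = 0 := by
    rw [integral_add hW1int hW2int, hIW1, hIW2, add_zero]
  have hEq : (fun z : ℝ × ℝ => W1fun p g z + W2fun p g z)
      = fun z : ℝ × ℝ => -(g z * g z) + 2/(p+1) * |g z| ^ (p + 1) := by
    funext z
    rw [sum_W p hp g z (heq z), rpow_split hp (g z)]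
  rw [hEq] at hsum0
  rw [integral_add (f := fun z : ℝ × ℝ => -(g z * g z))
    (g := fun z : ℝ × ℝ => 2/(p+1) * |g z| ^ (p + 1)) hg2int.neg
    (hRint.const_mul (2/(p+1))), integral_neg, integral_const_mul] at hsum0
  have hsq : (fun z : ℝ × ℝ => (g z) ^ 2) = fun z : ℝ × ℝ => g z * g z :=
    funext fun z => sq (g z)
  rw [hsq]
  have hp1' : p + 1 ≠ 0 := ne_of_gt hp1
  set A : ℝ := ∫ z : ℝ × ℝ, |g z| ^ (p + 1)
  set B : ℝ := ∫ z : ℝ × ℝ, g z * g z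
  field_simp at hsum0 ⊢
  linarith
end

section
/- (Positivity of the error operator 𝓔.) Let p > 1 and let Q(x,y) = g(√(x² + y²)), where g : [0, ∞) → ℝ is smooth, nonnegative, and nonincreasing. Then: (i) for every (x,y) ∈ ℝ², x · ∂_x((Q(x,y))^{p−1}) ≤ 0; and consequently (ii) for every Schwartz function v : ℝ² → ℝ, ⟨𝓔v, v⟩ = ∫_{ℝ²} [ 2 (∂_x v)² − p x ∂_x(Q^{p−1}) v² ] dx dy ≥ 0, where 𝓔 = −2∂_x² − p x ∂_x(Q^{p−1}). -/
open MeasureTheory Real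

/-- positivity of the error operator 𝓔 = -2∂ₓ² - p x ∂ₓ(Q^{p-1})
for a radially symmetric, radially nonincreasing, nonnegative profile Q. -/
theorem error_operator_positive (p : ℝ) (hp : 1 < p) (g : ℝ → ℝ)
    (hg : ContDiffOn ℝ (⊤ : ℕ∞) g (Set.Ici 0))
    (hgnn : ∀ r : ℝ, 0 ≤ r → 0 ≤ g r)
    (hgmono : AntitoneOn g (Set.Ici 0))
    (Q : ℝ × ℝ → ℝ) (hQ : ∀ z : ℝ × ℝ, Q z = g (Real.sqrt (z.1 ^ 2 + z.2 ^ 2))) :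
    (∀ z : ℝ × ℝ, z.1 * pdx (fun y => Q y ^ (p - 1)) z ≤ 0) ∧
    (∀ v : ℝ × ℝ → ℝ, IsSchwartz v →
      0 ≤ ∫ z : ℝ × ℝ,
        (2 * (pdx v z) ^ 2 - p * z.1 * pdx (fun y => Q y ^ (p - 1)) z * (v z) ^ 2)) := by

  have key : ∀ z : ℝ × ℝ, z.1 * pdx (fun y => Q y ^ (p - 1)) z ≤ 0 := by
    intro z
    set F : ℝ × ℝ → ℝ := fun y => Q y ^ (p - 1) with hF
    by_cases hdiff : DifferentiableAt ℝ F z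
    · have hmono : ∀ s t : ℝ, s ^ 2 ≤ t ^ 2 → F (t, z.2) ≤ F (s, z.2) := by
        intro s t hst
        simp only [hF, hQ]
        have h1 : Real.sqrt (s ^ 2 + z.2 ^ 2) ≤ Real.sqrt (t ^ 2 + z.2 ^ 2) :=
          Real.sqrt_le_sqrt (by linarith)
        have h2 : g (Real.sqrt (t ^ 2 + z.2 ^ 2)) ≤ g (Real.sqrt (s ^ 2 + z.2 ^ 2)) :=
          hgmono (Set.mem_Ici.mpr (Real.sqrt_nonneg _)) (Set.mem_Ici.mpr (Real.sqrt_nonneg _)) h1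
        exact Real.rpow_le_rpow (hgnn _ (Real.sqrt_nonneg _)) h2 (by linarith)
      have hd : HasDerivAt (fun t => F (t, z.2)) (pdx F z) z.1 := by
        have h1 : HasDerivAt (fun t : ℝ => (t, z.2)) ((1 : ℝ), (0 : ℝ)) z.1 :=
          (hasDerivAt_id z.1).prodMk (hasDerivAt_const z.1 z.2)
        have h2 := hdiff.hasFDerivAt.comp_hasDerivAt z.1 h1
        exact h2
      have hslope := hasDerivAt_iff_tendsto_slope.mp hd
      rcases lt_trichotomy z.1 0 with hx | hx | hx
      · have hdle : 0 ≤ pdx F z := by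
          have hsub : Set.Iio z.1 ⊆ {z.1}ᶜ := fun t ht => ne_of_lt ht
          refine ge_of_tendsto (hslope.mono_left (nhdsWithin_mono z.1 hsub)) ?_
          filter_upwards [eventually_mem_nhdsWithin] with t ht
          have ht' : t < z.1 := ht
          have hsq : z.1 ^ 2 ≤ t ^ 2 := by nlinarith
          have hFle : F (t, z.2) ≤ F (z.1, z.2) := hmono z.1 t hsq
          have hnum : F (t, z.2) - F (z.1, z.2) ≤ 0 := by linarith
          have hden : t - z.1 < 0 := by linarith
          have : 0 ≤ (F (t, z.2) - F (z.1, z.2)) / (t - z.1) :=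
            div_nonneg_of_nonpos hnum (le_of_lt hden)
          simpa [slope_def_field] using this
        nlinarith
      · simp [hx]
      · have hdle : pdx F z ≤ 0 := by
          have hsub : Set.Ioi z.1 ⊆ {z.1}ᶜ := fun t ht => ne_of_gt ht
          refine le_of_tendsto (hslope.mono_left (nhdsWithin_mono z.1 hsub)) ?_
          filter_upwards [eventually_mem_nhdsWithin] with t ht
          have ht' : z.1 < t := ht
          have hsq : z.1 ^ 2 ≤ t ^ 2 := by nlinarith
          have hFle : F (t, z.2) ≤ F (z.1, z.2) := hmono z.1 t hsq
          have hnum : F (t, z.2) - F (z.1, z.2) ≤ 0 := by linarith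
          have hden : 0 < t - z.1 := by linarith
          have : (F (t, z.2) - F (z.1, z.2)) / (t - z.1) ≤ 0 :=
            div_nonpos_of_nonpos_of_nonneg hnum (le_of_lt hden)
          simpa [slope_def_field] using this
        nlinarith
    · have h0 : fderiv ℝ F z = 0 := fderiv_zero_of_not_differentiableAt hdiff
      simp [pdx, h0]
  refine ⟨key, ?_⟩
  intro v _
  apply integral_nonneg
  intro z
  have h1 : z.1 * pdx (fun y => Q y ^ (p - 1)) z * (v z) ^ 2 ≤ 0 :=
    mul_nonpos_of_nonpos_of_nonneg (key z) (sq_nonneg _)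
  have h2 : (0 : ℝ) ≤ (pdx v z) ^ 2 := sq_nonneg _
  simp only [Pi.zero_apply]
  nlinarith
end
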